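/- arXiv:2110.02320 — 6 statements merged into one kernel-verified Lean document; each statement's English description precedes it below -/
import Mathlib

section
/- Let X be a real Banach space, let 𝔰 be a projectional skeleton on X, and let A be a subset of X that countably supports D(𝔰). Then there exists a projectional skeleton (P_s)_{s∈Γ} on X that is isomorphic to a projectional subskeleton of 𝔰 and such that P_s(x) ∈ {0, x} for every x ∈ A and every s ∈ Γ. -/
open Set Filter Topology

noncomputable section

universe u v w

open scoped Classical

/-- A set `A ⊆ E` countably supports a functional `f` if `{x ∈ A | f x ≠ 0}` is countable. -/
def CountablySupports {E : Type u} [NormedAddCommGroup E] [NormedSpace ℝ E]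
    (A : Set E) (f : StrongDual ℝ E) : Prop :=
  {x ∈ A | f x ≠ 0}.Countable

/-- A set is linearly dense if its closed linear span is the whole space. -/
def LinearlyDense {E : Type u} [NormedAddCommGroup E] [NormedSpace ℝ E] (A : Set E) : Prop :=
  Dense ((Submodule.span ℝ A : Submodule ℝ E) : Set E)

/-- A subset of a partially ordered set is σ-closed if it contains the suprema of its
increasing sequences. -/
def IsSigmaClosed {Γ : Type v} [PartialOrder Γ] (Γ' : Set Γ) : Prop :=
  ∀ f : ℕ → Γ, Monotone f → (∀ n, f n ∈ Γ') → ∀ s, IsLUB (Set.range f) s → s ∈ Γ'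

/-- A projectional skeleton on a normed space `E`. -/
def IsProjectionalSkeleton {E : Type u} [NormedAddCommGroup E] [NormedSpace ℝ E]
    {Γ : Type v} [PartialOrder Γ] (P : Γ → E →L[ℝ] E) : Prop :=
  (∀ s, (P s).comp (P s) = P s) ∧
  (∀ s t : Γ, ∃ u, s ≤ u ∧ t ≤ u) ∧
  (∀ f : ℕ → Γ, Monotone f → ∃ s, IsLUB (Set.range f) s) ∧
  (∀ s, TopologicalSpace.IsSeparable (Set.range ⇑(P s))) ∧
  (∀ s t, s ≤ t → (P s).comp (P t) = P s ∧ (P t).comp (P s) = P s) ∧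
  (∀ f : ℕ → Γ, Monotone f → ∀ s, IsLUB (Set.range f) s →
      Set.range ⇑(P s) = closure (⋃ n, Set.range ⇑(P (f n)))) ∧
  (∀ x : E, ∃ s, x ∈ Set.range ⇑(P s))

/-- The set `D(𝔰) = ⋃ₛ Pₛ*[E*]` induced by a family of projections. -/
def inducedSet {E : Type u} [NormedAddCommGroup E] [NormedSpace ℝ E]
    {Γ : Type v} (P : Γ → E →L[ℝ] E) : Set (StrongDual ℝ E) :=
  ⋃ s : Γ, Set.range fun f : StrongDual ℝ E => f.comp (P s)

/-- The pseudometric `ρ_A(f, g) = sup_{x ∈ A} |f x - g x|`. -/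
def rho {E : Type u} [NormedAddCommGroup E] [NormedSpace ℝ E]
    (A : Set E) (f g : StrongDual ℝ E) : ℝ :=
  ⨆ x : A, |f x - g x|

/-- The family `P` is `(A, ε)`-shrinking in `f`. -/
def IsShrinking {E : Type u} [NormedAddCommGroup E] [NormedSpace ℝ E]
    {Γ : Type v} [PartialOrder Γ] (P : Γ → E →L[ℝ] E)
    (A : Set E) (ε : ℝ) (f : StrongDual ℝ E) : Prop :=
  ∀ g : ℕ → Γ, Monotone g → ∀ s, IsLUB (Set.range g) s →
    Filter.limsup (fun n => rho A (f.comp (P (g n))) (f.comp (P s))) Filter.atTop ≤ ε * ‖f‖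

/-- The set `𝒯(𝔰, A)` of triples `(ε, B, f)` with `B ⊆ A` nonempty, `ε ≥ 0` and `𝔰`
`(B, ε)`-shrinking in `f`. -/
def shrinkT {E : Type u} [NormedAddCommGroup E] [NormedSpace ℝ E]
    {Γ : Type v} [PartialOrder Γ] (P : Γ → E →L[ℝ] E) (A : Set E) :
    Set (ℝ × Set E × StrongDual ℝ E) :=
  {p | 0 ≤ p.1 ∧ p.2.1.Nonempty ∧ p.2.1 ⊆ A ∧ IsShrinking P p.2.1 p.1 p.2.2}

/-- The density character: the least cardinality of a dense subset. -/
def densChar (E : Type u) [TopologicalSpace E] : Cardinal.{u} :=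
  sInf {c : Cardinal.{u} | ∃ s : Set E, Dense s ∧ Cardinal.mk ↥s = c}

/-- A separable projectional resolution of the identity (SPRI), indexed by ordinals `≤ κ`. -/
def IsSPRI {E : Type u} [NormedAddCommGroup E] [NormedSpace ℝ E]
    (κ : Ordinal.{u}) (Q : Ordinal.{u} → E →L[ℝ] E) : Prop :=
  Q 0 = 0 ∧ Q κ = ContinuousLinearMap.id ℝ E ∧
  (∀ α < κ, TopologicalSpace.IsSeparable (Set.range ⇑(Q (α + 1) - Q α))) ∧
  (∀ α < κ, ∀ β ≤ α, (Q α).comp (Q β) = Q β ∧ (Q β).comp (Q α) = Q β) ∧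
  ∀ x : E, x ∈ closure
      ((Submodule.span ℝ {y : E | ∃ β < κ, y = (Q (β + 1) - Q β) x} : Submodule ℝ E) : Set E)

/-- A transfinite sequence of projections `(Q_α)_{α ≤ κ}`, regarded as a family of projections
indexed by the linearly ordered set of ordinals `≤ κ`. -/
def spriFam {E : Type u} [NormedAddCommGroup E] [NormedSpace ℝ E]
    (κ : Ordinal.{u}) (Q : Ordinal.{u} → E →L[ℝ] E) :
    {α : Ordinal.{u} // α ≤ κ} → E →L[ℝ] E :=
  fun a => Q a.1

/-- Restriction of an operator to an invariant submodule. -/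
def subRestrict {E : Type u} [NormedAddCommGroup E] [NormedSpace ℝ E]
    (T : E →L[ℝ] E) (Y : Submodule ℝ E) (h : ∀ x ∈ Y, T x ∈ Y) : ↥Y →L[ℝ] ↥Y :=
  ContinuousLinearMap.codRestrict (T.comp Y.subtypeL) Y (fun y => h y y.2)

/-- The canonical embedding of `E` into its bidual, endowed with the weak* topology. -/
def iotaDD (E : Type u) [NormedAddCommGroup E] [NormedSpace ℝ E] :
    E → WeakDual ℝ (StrongDual ℝ E) :=
  fun x => StrongDual.toWeakDual (NormedSpace.inclusionInDoubleDual ℝ E x)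

/-- `⋃_{σ ∈ ω^ω} ⋂_{i ≥ 1} A (σ|_i)` for a family indexed by finite sequences of naturals. -/
def diagSet {E : Type u} (A : List ℕ → Set E) : Set E :=
  ⋃ σ : ℕ → ℕ, ⋂ (i : ℕ) (_ : 1 ≤ i), A (List.ofFn fun j : Fin i => σ (j : ℕ))

/-- `E` is weakly 𝒦-analytic. -/
def IsWeaklyKAnalytic (E : Type u) [NormedAddCommGroup E] [NormedSpace ℝ E] : Prop :=
  ∃ K : List ℕ → Set (WeakDual ℝ (StrongDual ℝ E)),
    (∀ t, IsCompact (K t)) ∧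
    Set.range (iotaDD E) =
      ⋃ σ : ℕ → ℕ, ⋂ (i : ℕ) (_ : 1 ≤ i), K (List.ofFn fun j : Fin i => σ (j : ℕ))

/-- `E` is a Vašák space (weakly countably determined). -/
def IsVasak (E : Type u) [NormedAddCommGroup E] [NormedSpace ℝ E] : Prop :=
  ∃ K : ℕ → Set (WeakDual ℝ (StrongDual ℝ E)),
    (∀ n, IsCompact (K n)) ∧
    ∀ x : E, ∀ z : WeakDual ℝ (StrongDual ℝ E),
      z ∉ Set.range (iotaDD E) → ∃ n, iotaDD E x ∈ K n ∧ z ∉ K n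

/-- `E` is weakly compactly generated. -/
def IsWCG (E : Type u) [NormedAddCommGroup E] [NormedSpace ℝ E] : Prop :=
  ∃ K : Set E, LinearlyDense K ∧ IsCompact (⇑(toWeakSpace ℝ E) '' K)

/-- Bundled projectional skeleton data on a space `E`. -/
structure SkeletonData (E : Type u) [NormedAddCommGroup E] [NormedSpace ℝ E] :
    Type (u + 1) where
  Γ : Type u
  [po : PartialOrder Γ]
  P : Γ → E →L[ℝ] E
  isSkeleton : IsProjectionalSkeleton P

attribute [instance] SkeletonData.po

/-- `Q` is isomorphic to a projectional subskeleton of `P`. -/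
def IsIsoToSubskeleton {E : Type u} [NormedAddCommGroup E] [NormedSpace ℝ E]
    {Λ : Type v} [PartialOrder Λ] {Γ : Type w} [PartialOrder Γ]
    (Q : Λ → E →L[ℝ] E) (P : Γ → E →L[ℝ] E) : Prop :=
  ∃ Γ' : Set Γ, IsSigmaClosed Γ' ∧
    IsProjectionalSkeleton (fun s : Γ' => P s.1) ∧
    ∃ φ : Λ ≃o Γ', ∀ l : Λ, Q l = P (φ l).1

/-- A rich family of closed separable subspaces. -/
def IsRichFamily {E : Type u} [NormedAddCommGroup E] [NormedSpace ℝ E]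
    (F : Set (Submodule ℝ E)) : Prop :=
  (∀ V ∈ F, IsClosed (V : Set E) ∧ TopologicalSpace.IsSeparable (V : Set E)) ∧
  (∀ V : Submodule ℝ E, IsClosed (V : Set E) → TopologicalSpace.IsSeparable (V : Set E) →
      ∃ W ∈ F, V ≤ W) ∧
  (∀ V : ℕ → Submodule ℝ E, (∀ n, V n ∈ F) → Monotone V →
      ∃ W ∈ F, (W : Set E) = closure (⋃ n, (V n : Set E)))

/-- Bundled data witnessing that `E` embeds isometrically into a WCG Banach space. -/
structure WCGEmbedding (E : Type u) [NormedAddCommGroup E] [NormedSpace ℝ E] :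
    Type (u + 1) where
  Y : Type u
  [nY : NormedAddCommGroup Y]
  [sY : NormedSpace ℝ Y]
  [cY : CompleteSpace Y]
  wcg : IsWCG Y
  emb : E →ₗᵢ[ℝ] Y

/-- The pre-annihilator `D_⊥ = {x | ∀ d ∈ D, d x = 0}` as a submodule. -/
def preAnn {E : Type u} [NormedAddCommGroup E] [NormedSpace ℝ E]
    (D : Set (StrongDual ℝ E)) : Submodule ℝ E :=
  ⨅ d : D, LinearMap.ker ((d.1 : E →L[ℝ] ℝ) : E →ₗ[ℝ] ℝ)

/-- The annihilator of a set of vectors, inside the dual. -/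
def dualAnn {E : Type u} [NormedAddCommGroup E] [NormedSpace ℝ E]
    (S : Set E) : Set (StrongDual ℝ E) :=
  {f | ∀ x ∈ S, f x = 0}

/-- `D ⊆ E*` is `C`-norming for the set `V ⊆ E`. -/
def IsCNorming {E : Type u} [NormedAddCommGroup E] [NormedSpace ℝ E]
    (C : ℝ) (D : Set (StrongDual ℝ E)) (V : Set E) : Prop :=
  ∀ x ∈ V, ‖x‖ ≤ C * ⨆ d : {d : StrongDual ℝ E // d ∈ D ∧ d ≠ 0}, |d.1 x| / ‖d.1‖

/-! ### Auxiliary material for `stmt1` -/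

section StmtOneAux

variable {X : Type u} [NormedAddCommGroup X] [NormedSpace ℝ X]
  {Γ : Type v} [PartialOrder Γ] {P : Γ → X →L[ℝ] X}

lemma psk_comm (hsk : IsProjectionalSkeleton P) {s t : Γ} (hst : s ≤ t) (x : X) :
    P s (P t x) = P s x := by
  have h := (hsk.2.2.2.2.1 s t hst).1
  rw [← ContinuousLinearMap.comp_apply, h]

lemma psk_fix_mono (hsk : IsProjectionalSkeleton P) {s t : Γ} (hst : s ≤ t) {x : X}
    (hx : P s x = x) : P t x = x := by
  have h := (hsk.2.2.2.2.1 s t hst).2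
  have h' : P t (P s x) = P s x := by rw [← ContinuousLinearMap.comp_apply, h]
  rw [← hx]; exact h'

lemma psk_fix_of_mem (hsk : IsProjectionalSkeleton P) {s : Γ} {x : X}
    (hx : x ∈ Set.range ⇑(P s)) : P s x = x := by
  obtain ⟨w, rfl⟩ := hx
  have := DFunLike.congr_fun (hsk.1 s) w
  rwa [ContinuousLinearMap.comp_apply] at this

/-- Pointwise convergence of a norm-bounded increasing sequence of skeleton projections to the
projection at the supremum. -/
lemma psk_tendsto (hsk : IsProjectionalSkeleton P) {f : ℕ → Γ} (hf : Monotone f) {s : Γ}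
    (hs : IsLUB (Set.range f) s) {N : ℝ} (hN : ∀ n, ‖P (f n)‖ ≤ N) (x : X) :
    Filter.Tendsto (fun n => P (f n) x) Filter.atTop (𝓝 (P s x)) := by
  have hN0 : 0 ≤ N := le_trans (norm_nonneg _) (hN 0)
  rw [Metric.tendsto_atTop]
  intro ε hε
  set y := P s x with hy
  have hyr : y ∈ closure (⋃ n, Set.range ⇑(P (f n))) := by
    rw [← hsk.2.2.2.2.2.1 f hf s hs]; exact ⟨x, rfl⟩
  have hε' : 0 < ε / (N + 2) := by positivity
  obtain ⟨z, hz, hdz⟩ := Metric.mem_closure_iff.mp hyr _ hε'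
  rw [Set.mem_iUnion] at hz
  obtain ⟨m, hzm⟩ := hz
  refine ⟨m, fun n hn => ?_⟩
  have hle : f n ≤ s := hs.1 (Set.mem_range_self n)
  have h1 : P (f n) x = P (f n) y := (psk_comm hsk hle x).symm
  have h2 : P (f n) z = z := psk_fix_mono hsk (hf hn) (psk_fix_of_mem hsk hzm)
  have h3 : P (f n) y - y = P (f n) (y - z) + (z - y) := by
    rw [map_sub, h2]; abel
  have h4 : ‖P (f n) (y - z)‖ ≤ N * ‖y - z‖ :=
    le_trans ((P (f n)).le_opNorm _) (mul_le_mul_of_nonneg_right (hN n) (norm_nonneg _))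
  have h5 : dist (P (f n) x) y ≤ (N + 1) * ‖y - z‖ := by
    rw [dist_eq_norm, h1, h3]
    calc ‖P (f n) (y - z) + (z - y)‖ ≤ ‖P (f n) (y - z)‖ + ‖z - y‖ := norm_add_le _ _
      _ ≤ N * ‖y - z‖ + ‖y - z‖ := by rw [norm_sub_rev z y]; linarith
      _ = (N + 1) * ‖y - z‖ := by ring
  have h6 : ‖y - z‖ < ε / (N + 2) := by rwa [← dist_eq_norm]
  have h7 : (N + 1) * ‖y - z‖ < ε := by
    have : (N + 1) * ‖y - z‖ ≤ (N + 1) * (ε / (N + 2)) :=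
      mul_le_mul_of_nonneg_left h6.le (by linarith)
    have h8 : (N + 1) * (ε / (N + 2)) < ε := by
      rw [mul_div_assoc', div_lt_iff₀ (by linarith)]
      nlinarith
    linarith
  exact lt_of_le_of_lt h5 h7

lemma psk_norm_lub_le (hsk : IsProjectionalSkeleton P) {f : ℕ → Γ} (hf : Monotone f) {s : Γ}
    (hs : IsLUB (Set.range f) s) {N : ℝ} (hN : ∀ n, ‖P (f n)‖ ≤ N) : ‖P s‖ ≤ N := by
  have hN0 : 0 ≤ N := le_trans (norm_nonneg _) (hN 0)
  refine ContinuousLinearMap.opNorm_le_bound _ hN0 fun x => ?_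
  have ht := (psk_tendsto hsk hf hs hN x).norm
  refine le_of_tendsto ht (Filter.Eventually.of_forall fun n => ?_)
  exact le_trans ((P (f n)).le_opNorm x)
    (mul_le_mul_of_nonneg_right (hN n) (norm_nonneg _))

/-- If `A` countably supports the induced set, then for every `s` only countably many points of
`A` are not annihilated by `P s`. -/
lemma psk_countable_nonzero (hsk : IsProjectionalSkeleton P) {A : Set X}
    (hA : ∀ f ∈ inducedSet P, CountablySupports A f) (s : Γ) :
    {x ∈ A | P s x ≠ 0}.Countable := by
  obtain ⟨c, hc, hcs⟩ := hsk.2.2.2.1 s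
  choose g hg1 hg2 using fun z : X => exists_dual_vector'' ℝ z
  have hsub : {x ∈ A | P s x ≠ 0} ⊆ ⋃ z ∈ c, {x ∈ A | ((g z).comp (P s)) x ≠ 0} := by
    intro x hx
    by_contra hmem
    simp only [Set.mem_iUnion, Set.mem_setOf_eq, not_exists, not_and, not_not] at hmem
    apply hx.2
    have hzero : ∀ z ∈ c, g z (P s x) = 0 := by
      intro z hz
      have := hmem z hz hx.1
      rwa [ContinuousLinearMap.comp_apply] at this
    by_contra h0
    have hpos : 0 < ‖P s x‖ / 2 := by
      have hn : 0 < ‖P s x‖ := norm_pos_iff.mpr h0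
      linarith
    have hmemc : P s x ∈ closure c := hcs ⟨x, rfl⟩
    obtain ⟨z, hz, hdz⟩ := Metric.mem_closure_iff.mp hmemc _ hpos
    have h1 : ‖z‖ ≤ ‖z - P s x‖ := by
      have hg2' : g z z = ‖z‖ := by exact_mod_cast hg2 z
      have h2 : (‖z‖ : ℝ) = g z (z - P s x) := by
        rw [map_sub, hzero z hz, sub_zero, hg2']
      have h4 : |g z (z - P s x)| ≤ ‖z - P s x‖ := by
        calc |g z (z - P s x)| = ‖g z (z - P s x)‖ := (Real.norm_eq_abs _).symm
          _ ≤ ‖g z‖ * ‖z - P s x‖ := (g z).le_opNorm _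
          _ ≤ 1 * ‖z - P s x‖ := mul_le_mul_of_nonneg_right (hg1 z) (norm_nonneg _)
          _ = ‖z - P s x‖ := one_mul _
      rw [h2]
      exact le_trans (le_abs_self _) h4
    have h5 : ‖z - P s x‖ < ‖P s x‖ / 2 := by
      rw [norm_sub_rev, ← dist_eq_norm]; exact hdz
    have h6 : ‖P s x‖ ≤ ‖P s x - z‖ + ‖z‖ := by
      calc ‖P s x‖ = ‖(P s x - z) + z‖ := by rw [sub_add_cancel]
        _ ≤ ‖P s x - z‖ + ‖z‖ := norm_add_le _ _
    have h7 : ‖P s x - z‖ < ‖P s x‖ / 2 := by rw [← dist_eq_norm]; exact hdz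
    linarith
  refine Set.Countable.mono hsub ?_
  refine hc.biUnion fun z hz => ?_
  exact hA ((g z).comp (P s)) (Set.mem_iUnion.mpr ⟨s, ⟨g z, rfl⟩⟩)

/-- There is a uniform bound `N` such that projections of norm at most `N` are cofinal. -/
lemma psk_exists_bound (hsk : IsProjectionalSkeleton P) :
    ∃ N : ℕ, ∀ t, ∃ s, t ≤ s ∧ ‖P s‖ ≤ N := by
  by_contra hcon
  push_neg at hcon
  choose t ht using hcon
  obtain ⟨j, hj⟩ : ∃ j : Γ → Γ → Γ, ∀ a b, a ≤ j a b ∧ b ≤ j a b := by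
    choose j h1 h2 using hsk.2.1
    exact ⟨j, fun a b => ⟨h1 a b, h2 a b⟩⟩
  let u : ℕ → Γ := fun n => Nat.rec (t 0) (fun n un => j un (t (n + 1))) n
  have hu : Monotone u := monotone_nat_of_le_succ fun n => (hj _ _).1
  have hut : ∀ n, t n ≤ u n := by
    intro n
    cases n with
    | zero => exact le_refl _
    | succ n => exact (hj _ _).2
  obtain ⟨s, hs⟩ := hsk.2.2.1 u hu
  obtain ⟨N, hN⟩ := exists_nat_ge ‖P s‖
  have := ht N s (le_trans (hut N) (hs.1 ⟨N, rfl⟩))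
  linarith

end StmtOneAux

/-- Syntax trees used to generate a small σ-closed directed subset of `Γ`. -/
inductive PSTree (X : Type u) : Type u where
  | base : X → PSTree X
  | join : PSTree X → PSTree X → PSTree X
  | sup : (ℕ → PSTree X) → PSTree X

/-- Evaluation of a `PSTree` in a partially ordered set. -/
def PSTree.eval {X : Type u} {Γ : Type v} [PartialOrder Γ] (bb : X → Γ) (J : Γ → Γ → Γ)
    (lub : ∀ f : ℕ → Γ, Monotone f → Γ) : PSTree X → Γ
  | .base x => bb x
  | .join a b => J (PSTree.eval bb J lub a) (PSTree.eval bb J lub b)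
  | .sup f =>
    if h : Monotone (fun n => PSTree.eval bb J lub (f n)) then lub _ h
    else PSTree.eval bb J lub (f 0)

/-- A projectional skeleton transfers along an order isomorphism of index sets. -/
lemma isProjectionalSkeleton_comp_orderIso {E : Type u} [NormedAddCommGroup E]
    [NormedSpace ℝ E] {Λ : Type w} {Λ' : Type v} [PartialOrder Λ] [PartialOrder Λ']
    {Q : Λ' → E →L[ℝ] E} (h : IsProjectionalSkeleton Q) (φ : Λ ≃o Λ') :
    IsProjectionalSkeleton (fun l => Q (φ l)) := by
  obtain ⟨h1, h2, h3, h4, h5, h6, h7⟩ := h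
  have hrange : ∀ f : ℕ → Λ, Set.range (fun n => φ (f n)) = φ '' Set.range f := by
    intro f
    rw [← Set.range_comp]
    rfl
  refine ⟨fun s => h1 _, ?_, ?_, fun s => h4 _, fun s t hst => h5 _ _ (φ.monotone hst),
    ?_, ?_⟩
  · intro s t
    obtain ⟨u, hu1, hu2⟩ := h2 (φ s) (φ t)
    exact ⟨φ.symm u, φ.le_symm_apply.mpr hu1, φ.le_symm_apply.mpr hu2⟩
  · intro f hf
    obtain ⟨s, hs⟩ := h3 (fun n => φ (f n)) (φ.monotone.comp hf)
    rw [hrange] at hs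
    exact ⟨φ.symm s, (OrderIso.isLUB_image φ).mp hs⟩
  · intro f hf s hs
    refine h6 (fun n => φ (f n)) (φ.monotone.comp hf) (φ s) ?_
    rw [hrange]
    exact (OrderIso.isLUB_image' φ).mpr hs
  · intro x
    obtain ⟨s, hs⟩ := h7 x
    refine ⟨φ.symm s, ?_⟩
    simpa using hs

/-- If `A` countably supports the set induced by a projectional skeleton `𝔰`,
then there is a projectional skeleton isomorphic to a subskeleton of `𝔰` whose projections map
each point of `A` to `0` or to itself. -/
theorem stmt1 {X : Type u} [NormedAddCommGroup X] [NormedSpace ℝ X] [CompleteSpace X]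
    {Γ : Type v} [PartialOrder Γ] (P : Γ → X →L[ℝ] X)
    (hsk : IsProjectionalSkeleton P) (A : Set X)
    (hA : ∀ f ∈ inducedSet P, CountablySupports A f) :
    ∃ S : SkeletonData X, IsIsoToSubskeleton S.P P ∧
      ∀ l : S.Γ, ∀ x ∈ A, S.P l x = 0 ∨ S.P l x = x := by
  obtain ⟨N, hNcof⟩ := psk_exists_bound hsk
  -- the "good" indices: norm-bounded projections behaving well on `A`
  set Good : Set Γ := {s | ‖P s‖ ≤ (N : ℝ) ∧ ∀ x ∈ A, P s x = 0 ∨ P s x = x} with hGood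
  -- `Good` is σ-closed
  have hGoodSigma : ∀ f : ℕ → Γ, Monotone f → (∀ n, f n ∈ Good) → ∀ s,
      IsLUB (Set.range f) s → s ∈ Good := by
    intro f hf hfG s hs
    refine ⟨psk_norm_lub_le hsk hf hs fun n => (hfG n).1, ?_⟩
    intro x hx
    by_cases hfix : ∃ n, P (f n) x = x
    · obtain ⟨n, hn⟩ := hfix
      exact Or.inr (psk_fix_mono hsk (hs.1 (Set.mem_range_self n)) hn)
    · push_neg at hfix
      left
      have h0 : ∀ n, P (f n) x = 0 := fun n => ((hfG n).2 x hx).resolve_right (hfix n)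
      have htend := psk_tendsto hsk hf hs (fun n => (hfG n).1) x
      simp only [h0] at htend
      exact tendsto_nhds_unique htend tendsto_const_nhds
  -- `Good` is cofinal
  have h1 := hsk.1
  have h3 := hsk.2.2.1
  have h4 := hsk.2.2.2.1
  have h5 := hsk.2.2.2.2.1
  have h6 := hsk.2.2.2.2.2.1
  have h7 := hsk.2.2.2.2.2.2
  choose g hg1 hg2 using hNcof
  have h2 := hsk.2.1
  choose j hj1 hj2 using h2
  have hTex : ∀ x : X, ∃ s, P s x = x := fun x => by
    obtain ⟨s, hs⟩ := h7 x
    exact ⟨s, psk_fix_of_mem hsk hs⟩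
  choose T hT using hTex
  have hCs : ∀ s : Γ, ∃ e : ℕ → X, {x ∈ A | P s x ≠ 0} ⊆ Set.range e := by
    intro s
    have hc := (psk_countable_nonzero hsk hA s).insert 0
    obtain ⟨e, he⟩ := hc.exists_eq_range ⟨0, Set.mem_insert _ _⟩
    exact ⟨e, (Set.subset_insert _ _).trans he.subset⟩
  choose E hE using hCs
  have hGoodCof : ∀ t, ∃ s ∈ Good, t ≤ s := by
    intro t
    let r : Γ → ℕ → Γ := fun s m => Nat.rec s (fun m rm => j rm (T (E s m))) m
    have hr_mono : ∀ s, Monotone (r s) := fun s => monotone_nat_of_le_succ fun m => hj1 _ _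
    obtain ⟨w, hw⟩ : ∃ w : Γ → Γ, ∀ s, IsLUB (Set.range (r s)) (w s) := by
      choose w hw using fun s => h3 (r s) (hr_mono s)
      exact ⟨w, hw⟩
    have hw_ge : ∀ s, s ≤ w s := fun s => (hw s).1 ⟨0, rfl⟩
    have hw_fix : ∀ s, ∀ x ∈ A, P s x ≠ 0 → P (w s) x = x := by
      intro s x hxA hx
      obtain ⟨m, hm⟩ := hE s ⟨hxA, hx⟩
      have hstep : T (E s m) ≤ r s (m + 1) := hj2 (r s m) (T (E s m))
      have hfix0 : P (T x) x = x := hT x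
      have hfix1 : P (r s (m + 1)) x = x := by
        rw [← hm] at hfix0 ⊢
        exact psk_fix_mono hsk hstep hfix0
      exact psk_fix_mono hsk ((hw s).1 ⟨m + 1, rfl⟩) hfix1
    let u : ℕ → Γ := fun k => Nat.rec (g t) (fun _ uk => g (w uk)) k
    have hu_mono : Monotone u := monotone_nat_of_le_succ fun k =>
      le_trans (hw_ge (u k)) (hg1 (w (u k)))
    have hu_bd : ∀ k, ‖P (u k)‖ ≤ (N : ℝ) := by
      intro k
      cases k with
      | zero => exact hg2 t
      | succ k => exact hg2 (w (u k))
    obtain ⟨s, hs⟩ := h3 u hu_mono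
    refine ⟨s, ⟨psk_norm_lub_le hsk hu_mono hs hu_bd, ?_⟩,
      le_trans (hg1 t) (hs.1 ⟨0, rfl⟩)⟩
    intro x hx
    by_cases h0 : P s x = 0
    · exact Or.inl h0
    · right
      have htend := psk_tendsto hsk hu_mono hs hu_bd x
      have hex : ∃ k, P (u k) x ≠ 0 := by
        by_contra hcnot
        push_neg at hcnot
        simp only [hcnot] at htend
        exact h0 (tendsto_nhds_unique htend tendsto_const_nhds)
      obtain ⟨k, hk⟩ := hex
      have hfixw : P (w (u k)) x = x := hw_fix (u k) x hx hk
      have hfixu : P (u (k + 1)) x = x := psk_fix_mono hsk (hg1 (w (u k))) hfixw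
      exact psk_fix_mono hsk (hs.1 ⟨k + 1, rfl⟩) hfixu
  -- choice functions for the tree evaluation
  have hbbex : ∀ x : X, ∃ s, s ∈ Good ∧ P s x = x := by
    intro x
    obtain ⟨t, ht⟩ : ∃ s, P s x = x := ⟨T x, hT x⟩
    obtain ⟨s, hsG, hts⟩ := hGoodCof t
    exact ⟨s, hsG, psk_fix_mono hsk hts ht⟩
  choose bb hbb1 hbb2 using hbbex
  have hJex : ∀ a b : Γ, ∃ u, u ∈ Good ∧ a ≤ u ∧ b ≤ u := by
    intro a b
    obtain ⟨s, hsG, hts⟩ := hGoodCof (j a b)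
    exact ⟨s, hsG, le_trans (hj1 a b) hts, le_trans (hj2 a b) hts⟩
  choose J hJ0 hJ1 hJ2 using hJex
  have h3' := hsk.2.2.1
  choose lub hlub using h3' 
  set Γ' : Set Γ := Set.range (PSTree.eval bb J lub) with hΓ'
  -- every generated index is good
  have hsubGood : ∀ t : PSTree X, PSTree.eval bb J lub t ∈ Good := by
    intro t
    induction t with
    | base x => exact hbb1 x
    | join a b iha ihb => exact hJ0 _ _
    | sup f ih =>
      rw [PSTree.eval]
      split
      · next hmono => exact hGoodSigma _ hmono (fun n => ih n) _ (hlub _ hmono)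
      · exact ih 0
  have hΓ'Good : ∀ p : ↥Γ', p.1 ∈ Good := by
    rintro ⟨_, t, rfl⟩
    exact hsubGood t
  -- `Γ'` is σ-closed
  have hsigma : IsSigmaClosed Γ' := by
    intro f hf hfmem s hs
    choose t ht using hfmem
    refine ⟨PSTree.sup t, ?_⟩
    have hmono : Monotone (fun n => PSTree.eval bb J lub (t n)) := by
      simp only [ht]; exact hf
    rw [PSTree.eval, dif_pos hmono]
    have h1' := hlub _ hmono
    have hre : Set.range (fun n => PSTree.eval bb J lub (t n)) = Set.range f := by
      simp only [ht]
    rw [hre] at h1'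
    exact h1'.unique hs
  -- lifting LUBs to the subtype
  have hsubLUB : ∀ (f : ℕ → ↥Γ'), Monotone f → ∃ s : ↥Γ',
      IsLUB (Set.range f) s ∧ IsLUB (Set.range fun n => (f n).1) s.1 := by
    intro f hf
    have hf' : Monotone fun n => (f n).1 := fun a b hab => Subtype.coe_le_coe.mpr (hf hab)
    set s := lub _ hf' with hsdef
    have hs := hlub _ hf'
    have hsΓ' : s ∈ Γ' := hsigma _ hf' (fun n => (f n).2) s hs
    refine ⟨⟨s, hsΓ'⟩, ⟨?_, ?_⟩, hs⟩
    · rintro a ⟨n, rfl⟩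
      exact Subtype.coe_le_coe.mp (hs.1 ⟨n, rfl⟩)
    · intro b hb
      have hb' : s ≤ b.1 := hs.2 (by rintro a ⟨n, rfl⟩; exact hb ⟨n, rfl⟩)
      exact Subtype.coe_le_coe.mp hb'
  -- the subskeleton property
  have hskel' : IsProjectionalSkeleton (fun s : ↥Γ' => P s.1) := by
    refine ⟨fun s => h1 s.1, ?_, ?_, fun s => h4 s.1,
      fun s t hst => h5 s.1 t.1 hst, ?_, ?_⟩
    · rintro ⟨_, a, rfl⟩ ⟨_, b, rfl⟩
      refine ⟨⟨J _ _, PSTree.join a b, rfl⟩, ?_, ?_⟩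
      · exact Subtype.coe_le_coe.mp (hJ1 _ _)
      · exact Subtype.coe_le_coe.mp (hJ2 _ _)
    · intro f hf
      obtain ⟨s, hs, _⟩ := hsubLUB f hf
      exact ⟨s, hs⟩
    · intro f hf s hs
      obtain ⟨s0, hs0sub, hs0⟩ := hsubLUB f hf
      have hse : s = s0 := hs.unique hs0sub
      subst hse
      exact h6 (fun n => (f n).1) (fun a b hab => Subtype.coe_le_coe.mpr (hf hab)) s.1 hs0
    · intro x
      exact ⟨⟨bb x, PSTree.base x, rfl⟩, ⟨x, hbb2 x⟩⟩
  -- shrink to universe u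
  haveI hsmall : Small.{u} ↥Γ' := small_range _
  let e := equivShrink ↥Γ'
  letI po : PartialOrder (Shrink.{u} ↥Γ') := PartialOrder.lift e.symm e.symm.injective
  let φ : Shrink.{u} ↥Γ' ≃o ↥Γ' := { toEquiv := e.symm, map_rel_iff' := Iff.rfl }
  refine ⟨⟨Shrink.{u} ↥Γ', fun l => P (φ l).1,
    isProjectionalSkeleton_comp_orderIso hskel' φ⟩,
    ⟨Γ', hsigma, hskel', φ, fun l => rfl⟩, ?_⟩
  intro l x hx
  exact (hΓ'Good (φ l)).2 x hx
end
end

section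
/- Let X be a real Banach space, (P_s)_{s∈Γ} a projectional skeleton on X, and A ⊂ X a linearly dense set such that P_s(x) ∈ {0, x} for every x ∈ A and every s ∈ Γ. Then the skeleton is commutative, i.e., P_s ∘ P_t = P_t ∘ P_s for all s, t ∈ Γ. -/
open Set Filter Topology

noncomputable section

universe u v w

open scoped Classical

/-- A projectional skeleton whose projections map each point of a linearly
dense set `A` to `0` or itself is commutative. -/
theorem stmt2 {X : Type u} [NormedAddCommGroup X] [NormedSpace ℝ X] [CompleteSpace X]
    {Γ : Type v} [PartialOrder Γ] (P : Γ → X →L[ℝ] X)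
    (hsk : IsProjectionalSkeleton P) (A : Set X) (hdense : LinearlyDense A)
    (hA : ∀ x ∈ A, ∀ s, P s x = 0 ∨ P s x = x) :
    ∀ s t, (P s).comp (P t) = (P t).comp (P s) := by
  intro s t
  have hAeq : Set.EqOn ⇑((P s).comp (P t)) ⇑((P t).comp (P s)) A := by
    intro x hx
    simp only [ContinuousLinearMap.comp_apply]
    rcases hA x hx t with ht | ht <;> rcases hA x hx s with hs | hs <;>
      simp [ht, hs]
  have hspan : Set.EqOn ⇑((P s).comp (P t)) ⇑((P t).comp (P s))
      ((Submodule.span ℝ A : Submodule ℝ X) : Set X) := by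
    intro x hx
    exact LinearMap.eqOn_span hAeq hx
  have := Continuous.ext_on hdense ((P s).comp (P t)).continuous
    ((P t).comp (P s)).continuous hspan
  ext x; exact congrFun this x
end
end

section
/- Let X be a nonseparable real Banach space with κ := dens X. Suppose there exist an SPRI (Q_α)_{α≤κ} in X and a non-empty set 𝒜 ⊂ B_X (B_X the closed unit ball of X) such that: (a) 𝒜 is linearly dense in X and countably supports X*; (b) Q_α(x) ∈ {0, x} for every x ∈ 𝒜 and α ≤ κ; (c) (Q_α)_{α≤κ} is (𝒜, 0)-shrinking in every element of X*. Then X is weakly compactly generated (WCG). -/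
open Set Filter Topology

noncomputable section

universe u v w

open scoped Classical

/-- countable dense subset inside a separable subset of a metric space -/
private lemma exists_countable_subset_dense {E : Type u} [NormedAddCommGroup E]
    {s : Set E} (hs : TopologicalSpace.IsSeparable s) :
    ∃ T ⊆ s, T.Countable ∧ s ⊆ closure T := by
  haveI := hs.separableSpace
  obtain ⟨t, htc, htd⟩ := TopologicalSpace.exists_countable_dense (↥s)
  refine ⟨Subtype.val '' t, by simp, htc.image _, ?_⟩
  intro x hx
  have h1 : (⟨x, hx⟩ : ↥s) ∈ closure t := htd _
  exact image_closure_subset_closure_image continuous_subtype_val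
    (mem_image_of_mem _ h1)

/-- an infinite set of ordinals contains a strictly increasing sequence -/
private lemma exists_strictMono_seq {Δ : Set Ordinal.{u}} (h : Δ.Infinite) :
    ∃ g : ℕ → Ordinal.{u}, StrictMono g ∧ ∀ n, g n ∈ Δ := by
  have key : ∀ s : Set Ordinal.{u}, s.Infinite → (s ∩ Set.Ioi (sInf s)).Infinite := by
    intro s hs
    have hsub : s \ {sInf s} ⊆ s ∩ Set.Ioi (sInf s) := by
      rintro x ⟨hxs, hxne⟩
      exact ⟨hxs, lt_of_le_of_ne (csInf_le (OrderBot.bddBelow s) hxs)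
        (fun hh => hxne (by simpa using hh.symm))⟩
    exact (hs.diff (Set.finite_singleton _)).mono hsub
  let S : ℕ → Set Ordinal.{u} := fun n => Nat.rec Δ (fun _ s => s ∩ Set.Ioi (sInf s)) n
  have hS : ∀ n, (S n).Infinite := by
    intro n; induction n with
    | zero => exact h
    | succ k ih => exact key _ ih
  have hSΔ : ∀ n, S n ⊆ Δ := by
    intro n; induction n with
    | zero => exact subset_rfl
    | succ k ih => exact (Set.inter_subset_left).trans ih
  refine ⟨fun n => sInf (S n), strictMono_nat_of_lt_succ ?_, fun n => hSΔ n (csInf_mem (hS n).nonempty)⟩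
  intro n
  have : sInf (S (n+1)) ∈ S (n+1) := csInf_mem (hS (n+1)).nonempty
  exact this.2

private lemma rho_ge {E : Type u} [NormedAddCommGroup E] [NormedSpace ℝ E]
    {A : Set E} (hb : ∀ x ∈ A, ‖x‖ ≤ 1) (F G : StrongDual ℝ E)
    {a : E} (ha : a ∈ A) : |F a - G a| ≤ rho A F G := by
  have hbdd : BddAbove (Set.range fun x : A => |F x - G x|) := by
    refine ⟨‖F - G‖, ?_⟩
    rintro r ⟨x, rfl⟩
    have h1 := (F - G).le_opNorm (x : E)
    rw [ContinuousLinearMap.sub_apply, Real.norm_eq_abs] at h1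
    calc |F x - G x| ≤ ‖F - G‖ * ‖(x : E)‖ := h1
      _ ≤ ‖F - G‖ * 1 := mul_le_mul_of_nonneg_left (hb x x.2) (norm_nonneg _)
      _ = ‖F - G‖ := mul_one _
  exact le_ciSup hbdd (⟨a, ha⟩ : A)

private lemma rho_le {E : Type u} [NormedAddCommGroup E] [NormedSpace ℝ E]
    {A : Set E} (hne : A.Nonempty) {F G : StrongDual ℝ E} {C : ℝ}
    (hF : ∀ x ∈ A, |F x| ≤ C) (hG : ∀ x ∈ A, |G x| ≤ C) : rho A F G ≤ 2 * C := by
  haveI := hne.to_subtype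
  apply ciSup_le
  intro x
  calc |F x - G x| ≤ |F x| + |G x| := by
        have := norm_sub_le (F x) (G x)
        simpa [Real.norm_eq_abs] using this
    _ ≤ C + C := add_le_add (hF x x.2) (hG x x.2)
    _ = 2 * C := (two_mul C).symm

/-- (Theorem 4.5, (iii) ⇒ (i).) An SPRI with the stated data implies that the
space is WCG. -/
theorem stmt14 {X : Type u} [NormedAddCommGroup X] [NormedSpace ℝ X] [CompleteSpace X]
    (hnsep : ¬ TopologicalSpace.SeparableSpace X)
    (Q : Ordinal.{u} → X →L[ℝ] X)
    (hQ : IsSPRI (densChar X).ord Q)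
    (A : Set X) (hne : A.Nonempty) (hball : A ⊆ Metric.closedBall (0 : X) 1)
    -- (a)
    (hdense : LinearlyDense A) (hsupp : ∀ f : StrongDual ℝ X, CountablySupports A f)
    -- (b)
    (h01 : ∀ x ∈ A, ∀ α ≤ (densChar X).ord, Q α x = 0 ∨ Q α x = x)
    -- (c)
    (hshr : ∀ f : StrongDual ℝ X, IsShrinking (spriFam (densChar X).ord Q) A 0 f) :
    IsWCG X := by
  classical
  set κ : Ordinal.{u} := (densChar X).ord with hκdef
  obtain ⟨hQ0, hQκ, hsep, hcomm, hspanQ⟩ := hQ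
  have hAnorm : ∀ x ∈ A, ‖x‖ ≤ 1 := fun x hx => mem_closedBall_zero_iff.1 (hball hx)
  have hsucc_le : ∀ {a b : Ordinal.{u}}, a < b → a + 1 ≤ b := by
    intro a b hab
    rw [Ordinal.add_one_eq_succ]
    exact Order.succ_le_of_lt hab
  -- composition facts
  have hcompQ : ∀ {β α : Ordinal.{u}}, β ≤ α → α ≤ κ → ∀ x : X,
      (Q β x = x → Q α x = x) ∧ (Q α x = 0 → Q β x = 0) := by
    intro β α hβα hακ x
    rcases eq_or_lt_of_le hακ with h | h
    · constructor
      · intro hx; rw [h, hQκ]; rfl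
      · intro hx
        have hx0 : x = 0 := by rw [h, hQκ] at hx; exact hx
        rw [hx0, map_zero]
    · have h2 := hcomm α h β hβα
      constructor
      · intro hx
        have h3 : Q α (Q β x) = Q β x := by
          rw [← ContinuousLinearMap.comp_apply, h2.1]
        rw [hx] at h3; exact h3
      · intro hx
        have h3 : Q β (Q α x) = Q β x := by
          rw [← ContinuousLinearMap.comp_apply, h2.2]
        rw [hx, map_zero] at h3; exact h3.symm
  -- every nonzero element of A has a successor "birth time"
  have hbirth : ∀ x ∈ A, x = 0 ∨ ∃ δ, δ < κ ∧ Q δ x = 0 ∧ Q (δ + 1) x = x := by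
    intro x hx
    by_cases hx0 : x = 0
    · exact Or.inl hx0
    right
    by_contra hex
    push_neg at hex
    have hsub : {y : X | ∃ β < κ, y = (Q (β + 1) - Q β) x} ⊆ {0} := by
      rintro y ⟨β, hβ, rfl⟩
      have hβκ : β ≤ κ := hβ.le
      have hβ1κ : β + 1 ≤ κ := hsucc_le hβ
      have e1 := h01 x hx β hβκ
      have e2 := h01 x hx (β + 1) hβ1κ
      simp only [ContinuousLinearMap.sub_apply, Set.mem_singleton_iff]
      rcases e2 with e2 | e2 <;> rcases e1 with e1 | e1
      · rw [e1, e2, sub_zero]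
      · -- Q (β+1) x = 0, Q β x = x : impossible
        have hup := (hcompQ (le_self_add (a := β) (b := 1)) hβ1κ x).1 e1
        exact absurd (hup.symm.trans e2) hx0
      · exact absurd e2 (hex β hβ e1)
      · rw [e1, e2, sub_self]
    have hspx := hspanQ x
    have hle : Submodule.span ℝ {y : X | ∃ β < κ, y = (Q (β + 1) - Q β) x} ≤ ⊥ :=
      Submodule.span_le.2 (by simpa using hsub)
    have hcl : x ∈ closure ({0} : Set X) := by
      refine closure_mono ?_ hspx
      intro y hy
      simpa using hle hy
    rw [closure_singleton] at hcl
    exact hx0 hcl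
  -- blocks
  set Ablk : Ordinal.{u} → Set X :=
    fun δ => {a | a ∈ A ∧ Q δ a = 0 ∧ Q (δ + 1) a = a} with hAblk
  -- countable dense families in each block
  have hE : ∀ δ : Ordinal.{u}, ∃ e : ℕ → X,
      (∀ n, e n = 0 ∨ e n ∈ Ablk δ) ∧ (δ < κ → Ablk δ ⊆ closure (Set.range e)) := by
    intro δ
    by_cases hδ : δ < κ
    · have hsepδ : TopologicalSpace.IsSeparable (Ablk δ) := by
        apply (hsep δ hδ).mono
        rintro a ⟨haA, h0, h1⟩
        exact ⟨a, by rw [ContinuousLinearMap.sub_apply, h1, h0, sub_zero]⟩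
      obtain ⟨T, hTsub, hTc, hTd⟩ := exists_countable_subset_dense hsepδ
      obtain ⟨e, he⟩ := (hTc.insert 0).exists_eq_range (Set.insert_nonempty _ _)
      refine ⟨e, ?_, ?_⟩
      · intro n
        have hmem : e n ∈ insert (0 : X) T := by rw [he]; exact Set.mem_range_self n
        rcases hmem with h | h
        · exact Or.inl h
        · exact Or.inr (hTsub h)
      · intro _
        refine hTd.trans (closure_mono ?_)
        rw [← he]
        exact Set.subset_insert _ _
    · exact ⟨fun _ => 0, fun n => Or.inl rfl, fun h => absurd h hδ⟩
  choose e hE1 hE2 using hE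
  have henorm : ∀ δ n, ‖e δ n‖ ≤ 1 := by
    intro δ n
    rcases hE1 δ n with h | h
    · simp [h]
    · exact hAnorm _ h.1
  -- the generating set
  set K : Set X := insert (0 : X)
    (⋃ (δ : Ordinal.{u}) (_ : δ < κ) (n : ℕ), {((n : ℝ) + 1)⁻¹ • e δ n}) with hKdef
  have h0K : (0 : X) ∈ K := Set.mem_insert _ _
  have hKmem : ∀ x ∈ K, x = 0 ∨ ∃ δ, δ < κ ∧ ∃ n : ℕ, x = ((n : ℝ) + 1)⁻¹ • e δ n := by
    intro x hx
    rcases hx with h | h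
    · exact Or.inl h
    · right
      simp only [Set.mem_iUnion, Set.mem_singleton_iff] at h
      obtain ⟨δ, hδ, n, hn⟩ := h
      exact ⟨δ, hδ, n, hn⟩
  -- linear density of K
  have hKd : LinearlyDense K := by
    rw [LinearlyDense, dense_iff_closure_eq]
    have hAsub : A ⊆ closure ((Submodule.span ℝ K : Submodule ℝ X) : Set X) := by
      intro x hxA
      rcases hbirth x hxA with hx0 | ⟨δ, hδ, h0, h1⟩
      · rw [hx0]
        exact subset_closure (Submodule.zero_mem _)
      · have hxAδ : x ∈ Ablk δ := ⟨hxA, h0, h1⟩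
        have hsubM : Set.range (e δ) ⊆ ((Submodule.span ℝ K : Submodule ℝ X) : Set X) := by
          rintro y ⟨n, rfl⟩
          have hmemK : ((n : ℝ) + 1)⁻¹ • e δ n ∈ K := by
            refine Set.mem_insert_iff.2 (Or.inr ?_)
            simp only [Set.mem_iUnion, Set.mem_singleton_iff]
            exact ⟨δ, hδ, n, rfl⟩
          have hne0 : ((n : ℝ) + 1) ≠ 0 := by positivity
          have hsm : ((n : ℝ) + 1) • (((n : ℝ) + 1)⁻¹ • e δ n) = e δ n :=
            smul_inv_smul₀ hne0 _
          exact hsm ▸ Submodule.smul_mem _ _ (Submodule.subset_span hmemK)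
        exact (hE2 δ hδ).trans ((closure_mono hsubM).trans (closure_mono subset_rfl)) hxAδ
    have hspA : ((Submodule.span ℝ A : Submodule ℝ X) : Set X) ⊆
        closure ((Submodule.span ℝ K : Submodule ℝ X) : Set X) := by
      have : Submodule.span ℝ A ≤ (Submodule.span ℝ K).topologicalClosure := by
        apply Submodule.span_le.2
        intro x hx
        exact hAsub hx
      intro x hx
      exact this hx
    apply Set.eq_univ_of_univ_subset
    calc (Set.univ : Set X) = closure ((Submodule.span ℝ A : Submodule ℝ X) : Set X) :=
          (dense_iff_closure_eq.1 hdense).symm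
      _ ⊆ closure (closure ((Submodule.span ℝ K : Submodule ℝ X) : Set X)) := closure_mono hspA
      _ = closure ((Submodule.span ℝ K : Submodule ℝ X) : Set X) := closure_closure
  -- finiteness of large-value sets
  have hfin : ∀ (f : StrongDual ℝ X) (ε : ℝ), 0 < ε → {x ∈ K | ε ≤ |f x|}.Finite := by
    intro f ε hε
    by_contra hinfin
    have hinf : {x ∈ K | ε ≤ |f x|}.Infinite := hinfin
    set N : ℕ := ⌈‖f‖ / ε⌉₊ with hN
    set Δ : Set Ordinal.{u} :=
      {δ | δ < κ ∧ ∃ n : ℕ, ε ≤ |f (((n : ℝ) + 1)⁻¹ • e δ n)|} with hΔ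
    -- basic estimate
    have hest : ∀ (δ : Ordinal.{u}) (n : ℕ), ε ≤ |f (((n : ℝ) + 1)⁻¹ • e δ n)| →
        (ε ≤ |f (e δ n)| ∧ n < N) := by
      intro δ n hn
      have hc : (0 : ℝ) < (n : ℝ) + 1 := by positivity
      have hval : |f (((n : ℝ) + 1)⁻¹ • e δ n)| = ((n : ℝ) + 1)⁻¹ * |f (e δ n)| := by
        rw [map_smul, smul_eq_mul, abs_mul, abs_of_pos (by positivity)]
      constructor
      · have hle1 : ((n : ℝ) + 1)⁻¹ ≤ 1 := by
          rw [inv_le_one_iff₀]; right; linarith [Nat.cast_nonneg (α := ℝ) n]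
        calc ε ≤ ((n : ℝ) + 1)⁻¹ * |f (e δ n)| := hval ▸ hn
          _ ≤ 1 * |f (e δ n)| := mul_le_mul_of_nonneg_right hle1 (abs_nonneg _)
          _ = |f (e δ n)| := one_mul _
      · have hfe : |f (e δ n)| ≤ ‖f‖ := by
          have := f.le_opNorm (e δ n)
          rw [Real.norm_eq_abs] at this
          calc |f (e δ n)| ≤ ‖f‖ * ‖e δ n‖ := this
            _ ≤ ‖f‖ * 1 := mul_le_mul_of_nonneg_left (henorm δ n) (norm_nonneg f)
            _ = ‖f‖ := mul_one _
        have h2 : ((n : ℝ) + 1) * ε ≤ ‖f‖ := by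
          calc ((n : ℝ) + 1) * ε ≤ ((n : ℝ) + 1) * (((n : ℝ) + 1)⁻¹ * |f (e δ n)|) :=
                mul_le_mul_of_nonneg_left (hval ▸ hn) hc.le
            _ = |f (e δ n)| := by field_simp
            _ ≤ ‖f‖ := hfe
        have h3 : (n : ℝ) + 1 ≤ ‖f‖ / ε := (le_div_iff₀ hε).2 h2
        have h4 : (n : ℝ) + 1 ≤ (N : ℝ) := h3.trans (Nat.le_ceil _)
        have h5 : (n : ℝ) < (N : ℝ) := by linarith
        exact_mod_cast h5
    -- Δ is infinite
    have hΔinf : Δ.Infinite := by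
      intro hΔfin
      apply hinf
      have hsub : {x ∈ K | ε ≤ |f x|} ⊆
          (fun p : Ordinal.{u} × ℕ => ((p.2 : ℝ) + 1)⁻¹ • e p.1 p.2) '' (Δ ×ˢ Set.Iio N) := by
        rintro x ⟨hxK, hxf⟩
        rcases hKmem x hxK with rfl | ⟨δ, hδ, n, rfl⟩
        · exfalso; simp only [map_zero, abs_zero] at hxf; linarith
        · have h2 := hest δ n hxf
          exact ⟨(δ, n), ⟨⟨hδ, n, hxf⟩, h2.2⟩, rfl⟩
      exact ((hΔfin.prod (Set.finite_Iio N)).image _).subset hsub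
    obtain ⟨d, hdmono, hdmem⟩ := exists_strictMono_seq hΔinf
    -- witnesses
    have hwit : ∀ k : ℕ, ∃ a : X, a ∈ A ∧ Q (d k) a = 0 ∧ Q (d k + 1) a = a ∧ ε ≤ |f a| := by
      intro k
      obtain ⟨hdκ, n, hn⟩ := hdmem k
      rcases hE1 (d k) n with h0 | hmem
      · exfalso
        rw [h0, smul_zero, map_zero, abs_zero] at hn
        linarith
      · exact ⟨e (d k) n, hmem.1, hmem.2.1, hmem.2.2, (hest (d k) n hn).1⟩
    choose a haA haQ0 haQ1 haf using hwit
    -- shrinking setup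
    set lam : Ordinal.{u} := sSup (Set.range fun k : ℕ => d k + 1) with hlam
    have hbdd : BddAbove (Set.range fun k : ℕ => d k + 1) := by
      refine ⟨κ, ?_⟩
      rintro y ⟨k, rfl⟩
      exact hsucc_le (hdmem k).1
    have hLUB : IsLUB (Set.range fun k : ℕ => d k + 1) lam :=
      isLUB_csSup (Set.range_nonempty _) hbdd
    have hlamκ : lam ≤ κ := hLUB.2 (by rintro y ⟨k, rfl⟩; exact hsucc_le (hdmem k).1)
    set Γg : ℕ → {α : Ordinal.{u} // α ≤ κ} :=
      fun k => ⟨d k + 1, hsucc_le (hdmem k).1⟩ with hΓg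
    have hgmono : Monotone Γg := by
      intro i j hij
      show d i + 1 ≤ d j + 1
      exact add_le_add_left (hdmono.monotone hij) 1
    have hsLUB : IsLUB (Set.range Γg) ⟨lam, hlamκ⟩ := by
      constructor
      · rintro y ⟨k, rfl⟩
        show d k + 1 ≤ lam
        exact hLUB.1 ⟨k, rfl⟩
      · rintro ⟨b, hbκ⟩ hb
        show lam ≤ b
        apply hLUB.2
        rintro y ⟨k, rfl⟩
        exact hb ⟨k, rfl⟩
    have hcontr := hshr f Γg hgmono ⟨lam, hlamκ⟩ hsLUB
    rw [zero_mul] at hcontr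
    set u : ℕ → ℝ := fun n => rho A (f.comp (spriFam κ Q (Γg n)))
      (f.comp (spriFam κ Q ⟨lam, hlamκ⟩)) with hu
    have hlow : ∀ k : ℕ, ε ≤ u k := by
      intro k
      have hd1 : d k + 1 ≤ d (k + 1) := hsucc_le (hdmono (Nat.lt_succ_self k))
      have hz : Q (d k + 1) (a (k + 1)) = 0 :=
        (hcompQ hd1 (hdmem (k + 1)).1.le _).2 (haQ0 (k + 1))
      have hd2 : d (k + 1) + 1 ≤ lam := hLUB.1 ⟨k + 1, rfl⟩
      have hone : Q lam (a (k + 1)) = a (k + 1) :=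
        (hcompQ hd2 hlamκ _).1 (haQ1 (k + 1))
      have hval : (f.comp (spriFam κ Q (Γg k))) (a (k + 1)) -
          (f.comp (spriFam κ Q ⟨lam, hlamκ⟩)) (a (k + 1)) = -(f (a (k + 1))) := by
        show f (Q (d k + 1) (a (k + 1))) - f (Q lam (a (k + 1))) = -(f (a (k + 1)))
        rw [hz, hone, map_zero, zero_sub]
      have h1 : ε ≤ |(f.comp (spriFam κ Q (Γg k))) (a (k + 1)) -
          (f.comp (spriFam κ Q ⟨lam, hlamκ⟩)) (a (k + 1))| := by
        rw [hval, abs_neg]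
        exact haf (k + 1)
      exact h1.trans (rho_ge hAnorm _ _ (haA (k + 1)))
    have hub : ∀ k : ℕ, u k ≤ 2 * ‖f‖ := by
      intro k
      apply rho_le hne
      · intro x hx
        rcases h01 x hx (d k + 1) (Γg k).2 with h | h
        · show |f (Q (d k + 1) x)| ≤ ‖f‖
          rw [h, map_zero, abs_zero]; exact norm_nonneg f
        · show |f (Q (d k + 1) x)| ≤ ‖f‖
          rw [h]
          have := f.le_opNorm x
          rw [Real.norm_eq_abs] at this
          calc |f x| ≤ ‖f‖ * ‖x‖ := this
            _ ≤ ‖f‖ * 1 := mul_le_mul_of_nonneg_left (hAnorm x hx) (norm_nonneg f)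
            _ = ‖f‖ := mul_one _
      · intro x hx
        rcases h01 x hx lam hlamκ with h | h
        · show |f (Q lam x)| ≤ ‖f‖
          rw [h, map_zero, abs_zero]; exact norm_nonneg f
        · show |f (Q lam x)| ≤ ‖f‖
          rw [h]
          have := f.le_opNorm x
          rw [Real.norm_eq_abs] at this
          calc |f x| ≤ ‖f‖ * ‖x‖ := this
            _ ≤ ‖f‖ * 1 := mul_le_mul_of_nonneg_left (hAnorm x hx) (norm_nonneg f)
            _ = ‖f‖ := mul_one _
    have hblow : ε ≤ Filter.limsup u Filter.atTop :=
      Filter.le_limsup_of_frequently_le (Filter.Frequently.of_forall hlow)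
        (Filter.isBoundedUnder_of ⟨2 * ‖f‖, hub⟩)
    have : ε ≤ 0 := hblow.trans hcontr
    linarith
  -- assemble weak compactness
  refine ⟨K, hKd, ?_⟩
  rw [isCompact_iff_ultrafilter_le_nhds]
  intro U hU
  have himg : (⇑(toWeakSpace ℝ X) '' K) ∈ U := Filter.le_principal_iff.1 hU
  by_cases hfincase : ∃ s ∈ U, s.Finite
  · obtain ⟨s, hsU, hsfin⟩ := hfincase
    obtain ⟨y, hys, hUy⟩ := Ultrafilter.eq_pure_of_finite_mem hsfin hsU
    refine ⟨y, ?_, ?_⟩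
    · rw [hUy] at himg
      exact himg
    · rw [hUy]
      exact pure_le_nhds y
  · push_neg at hfincase
    refine ⟨toWeakSpace ℝ X 0, Set.mem_image_of_mem _ h0K, ?_⟩
    have hBinj : Function.Injective ((topDualPairing ℝ X).flip) := by
      intro x y hxy
      apply (NormedSpace.eq_iff_forall_dual_eq ℝ).2
      intro g
      have := congrArg (fun φ => φ g) hxy
      simpa using this
    have htd : Filter.Tendsto (id : WeakSpace ℝ X → WeakSpace ℝ X) ↑U
        (𝓝 (toWeakSpace ℝ X 0)) := by
      refine (WeakBilin.tendsto_iff_forall_eval_tendsto (B := (topDualPairing ℝ X).flip) (f := id)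
        (x := toWeakSpace ℝ X 0) hBinj).2 ?_
      intro g
      have h0 : (topDualPairing ℝ X).flip (toWeakSpace ℝ X 0) g = 0 := by
        show g 0 = 0; exact map_zero g
      rw [h0]
      refine NormedAddCommGroup.tendsto_nhds_zero.2 ?_
      intro ε hε
      have hbad := hfin g ε hε
      have hbadimg : ((⇑(toWeakSpace ℝ X)) '' {x ∈ K | ε ≤ |g x|}).Finite := hbad.image _
      have hcompl : ((⇑(toWeakSpace ℝ X)) '' {x ∈ K | ε ≤ |g x|})ᶜ ∈ U :=
        Ultrafilter.compl_mem_iff_notMem.2 (fun h => hfincase _ h hbadimg)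
      refine Filter.mem_of_superset (Filter.inter_mem himg hcompl) ?_
      rintro z ⟨⟨x, hxK, rfl⟩, hz2⟩
      show ‖(topDualPairing ℝ X).flip (id (toWeakSpace ℝ X x)) g‖ < ε
      have hgx : ¬ (ε ≤ |g x|) := fun hge => hz2 (Set.mem_image_of_mem _ ⟨hxK, hge⟩)
      have : (topDualPairing ℝ X).flip (id (toWeakSpace ℝ X x)) g = g x := rfl
      rw [this, Real.norm_eq_abs]
      exact lt_of_not_ge hgx
    exact fun s hs => htd hs
end
end

section
/- Let X be a nonseparable real Banach space with κ := dens X. Suppose there exist an SPRI (Q_α)_{α≤κ} in X and a non-empty set 𝒜 ⊂ B_X (B_X the closed unit ball of X) such that: (a) 𝒜 is linearly dense in X and countably supports X*; (b) Q_α(x) ∈ {0, x} for every x ∈ 𝒜 and α ≤ κ; (c) for every ε > 0 there exists a decomposition 𝒜 = ⋃_{n∈ω} A_n^ε such that (Q_α)_{α≤κ} is (A_n^ε, ε/‖x*‖)-shrinking in x* for every n ∈ ω and every x* ∈ X* with x* ≠ 0. Then X is isometric to a subspace of a weakly compactly generated (WCG) Banach space, i.e., there exist a WCG Banach space Y and a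 linear isometric embedding of X into Y. -/
open Set Filter Topology

noncomputable section

universe u v w

open scoped Classical

section Stmt17Aux

variable {E : Type u} [NormedAddCommGroup E] [NormedSpace ℝ E]

lemma stmt17_rho_le {s : Set E} {f g : StrongDual ℝ E} {b : ℝ}
    (hb : 0 ≤ b) (h : ∀ x ∈ s, |f x - g x| ≤ b) : rho s f g ≤ b :=
  Real.iSup_le (fun x => h x x.2) hb

lemma stmt17_le_rho {s : Set E} {f g : StrongDual ℝ E} {b : ℝ}
    (h : ∀ x ∈ s, |f x - g x| ≤ b) {x : E} (hx : x ∈ s) : |f x - g x| ≤ rho s f g :=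
  le_ciSup (f := fun y : s => |f y - g y|)
    ⟨b, Set.forall_mem_range.2 fun y => h y y.2⟩ (⟨x, hx⟩ : s)

lemma stmt17_rho_nonneg {s : Set E} {f g : StrongDual ℝ E} : 0 ≤ rho s f g :=
  Real.iSup_nonneg fun x => abs_nonneg _

lemma stmt17_exists_separating (R : Set E) (hR : TopologicalSpace.IsSeparable R) :
    ∃ g : ℕ → StrongDual ℝ E, ∀ x ∈ R, x ≠ 0 → ∃ i, g i x ≠ 0 := by
  obtain ⟨c, hc, hRc⟩ := hR
  rcases c.eq_empty_or_nonempty with rfl | hne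
  · refine ⟨fun _ => 0, fun x hx hx0 => absurd (hRc hx) (by simp)⟩
  · obtain ⟨d, hd⟩ := hc.exists_eq_range hne
    have hg : ∀ i, ∃ g : StrongDual ℝ E, d i ≠ 0 → (‖g‖ = 1 ∧ g (d i) = ‖d i‖) := by
      intro i
      by_cases h : d i = 0
      · exact ⟨0, fun h' => absurd h h'⟩
      · obtain ⟨g, hg1, hg2⟩ := exists_dual_vector ℝ (d i) (norm_ne_zero_iff.2 h)
        exact ⟨g, fun _ => ⟨hg1, hg2⟩⟩
    choose g hg using hg
    refine ⟨g, fun x hxR hx0 => ?_⟩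
    have hxc : x ∈ closure c := hRc hxR
    have hpos : 0 < ‖x‖ / 3 := by
      have : 0 < ‖x‖ := norm_pos_iff.2 hx0
      linarith
    obtain ⟨y, hyc, hy⟩ := Metric.mem_closure_iff.1 hxc _ hpos
    rw [hd] at hyc
    obtain ⟨i, rfl⟩ := hyc
    have hdist : ‖x - d i‖ < ‖x‖ / 3 := by rwa [dist_eq_norm] at hy
    have hdi : ‖x‖ / 3 < ‖d i‖ := by
      have h1 : ‖x‖ - ‖d i‖ ≤ ‖x - d i‖ := norm_sub_norm_le x (d i)
      linarith
    have hdi0 : d i ≠ 0 := by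
      intro h
      rw [h, norm_zero] at hdi
      have : 0 < ‖x‖ := norm_pos_iff.2 hx0
      linarith
    obtain ⟨hg1, hg2⟩ := hg i hdi0
    refine ⟨i, fun hzero => ?_⟩
    have h1 : |g i (x - d i)| ≤ ‖x - d i‖ := by
      calc |g i (x - d i)| ≤ ‖g i‖ * ‖x - d i‖ := (g i).le_opNorm _
        _ = ‖x - d i‖ := by rw [hg1, one_mul]
    have h2 : g i x = g i (d i) + g i (x - d i) := by
      rw [map_sub]; ring
    rw [hzero] at h2
    have h3 : |g i (x - d i)| = ‖d i‖ := by
      have : g i (x - d i) = - g i (d i) := by linarith [h2]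
      rw [this, abs_neg, hg2, abs_of_nonneg (norm_nonneg _)]
    linarith [h3 ▸ h1]

lemma stmt17_isLUB_subtype {κ : Ordinal.{v}} {g : ℕ → Ordinal.{v}} {s : Ordinal.{v}}
    (hg : ∀ m, g m ≤ κ) (hs : s ≤ κ) (h : IsLUB (Set.range g) s) :
    IsLUB (Set.range fun m => (⟨g m, hg m⟩ : {α : Ordinal.{v} // α ≤ κ})) ⟨s, hs⟩ := by
  constructor
  · rintro a ⟨m, rfl⟩
    exact Subtype.mk_le_mk.2 (h.1 ⟨m, rfl⟩)
  · rintro ⟨u, hu⟩ hub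
    refine Subtype.mk_le_mk.2 (h.2 ?_)
    rintro a ⟨m, rfl⟩
    exact Subtype.mk_le_mk.1 (hub ⟨m, rfl⟩)

lemma stmt17_weak_le_nhds (U : Filter (WeakSpace ℝ E)) (x : E)
    (h : ∀ f : StrongDual ℝ E, Filter.Tendsto (fun y : E => f y) U (nhds (f x))) :
    U ≤ nhds (toWeakSpace ℝ E x) := by
  have hinj : Function.Injective ((topDualPairing ℝ E).flip) := by
    intro a b hab
    refine (NormedSpace.eq_iff_forall_dual_eq (𝕜 := ℝ)).2 fun g => ?_
    exact DFunLike.congr_fun hab g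
  rw [← Filter.tendsto_id']
  refine (WeakBilin.tendsto_iff_forall_eval_tendsto (topDualPairing ℝ E).flip hinj).2 ?_
  intro g
  exact h g

end Stmt17Aux

open scoped Pointwise


/-- (Theorem 4.7, (iii) ⇒ (i).) An SPRI with the stated data implies that the
space embeds isometrically into a WCG Banach space. -/
theorem stmt17 {X : Type u} [NormedAddCommGroup X] [NormedSpace ℝ X] [CompleteSpace X]
    (hnsep : ¬ TopologicalSpace.SeparableSpace X)
    (Q : Ordinal.{u} → X →L[ℝ] X)
    (hQ : IsSPRI (densChar X).ord Q)
    (A : Set X) (hne : A.Nonempty) (hball : A ⊆ Metric.closedBall (0 : X) 1)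
    -- (a)
    (hdense : LinearlyDense A) (hsupp : ∀ f : StrongDual ℝ X, CountablySupports A f)
    -- (b)
    (h01 : ∀ x ∈ A, ∀ α ≤ (densChar X).ord, Q α x = 0 ∨ Q α x = x)
    -- (c)
    (hshr : ∀ ε > (0 : ℝ), ∃ B : ℕ → Set X, A = (⋃ n, B n) ∧
      ∀ n : ℕ, ∀ f : StrongDual ℝ X, f ≠ 0 →
        IsShrinking (spriFam (densChar X).ord Q) (B n) (ε / ‖f‖) f) :
    Nonempty (WCGEmbedding X) := by
  classical
  obtain ⟨hQ0, hQκ, hsep, hcomm, hspan⟩ := hQ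
  set κ : Ordinal.{u} := (densChar X).ord with hκdef
  -- basic pointwise facts
  have hQ0' : ∀ y : X, Q 0 y = 0 := fun y => by rw [hQ0]; rfl
  have hQκ' : ∀ y : X, Q κ y = y := fun y => by rw [hQκ]; rfl
  -- upward monotonicity of the fixed-point property
  have M1 : ∀ (α β : Ordinal), α ≤ β → β ≤ κ → ∀ y : X, Q α y = y → Q β y = y := by
    intro α β hαβ hβκ y hy
    rcases eq_or_lt_of_le hβκ with rfl | hβ
    · exact hQκ' y
    · have h2 := DFunLike.congr_fun (hcomm β hβ α hαβ).1 y
      rw [ContinuousLinearMap.comp_apply] at h2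
      rw [hy] at h2
      exact h2
  -- uniform bound on values of the projections on A
  have hA1 : ∀ x ∈ A, ‖x‖ ≤ 1 := by
    intro x hx
    have := hball hx
    rwa [Metric.mem_closedBall, dist_zero_right] at this
  have hQA : ∀ x ∈ A, ∀ α, α ≤ κ → ‖Q α x‖ ≤ 1 := by
    intro x hx α hα
    rcases h01 x hx α hα with h | h
    · rw [h, norm_zero]; norm_num
    · rw [h]; exact hA1 x hx
  -- every nonzero element of A sits at a successor level
  have F1 : ∀ x ∈ A, x ≠ 0 → ∃ γ, γ < κ ∧ Q γ x = 0 ∧ Q (γ + 1) x = x := by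
    intro x hxA hx0
    by_contra hno
    push_neg at hno
    have hsub : {y : X | ∃ β, β < κ ∧ y = (Q (β + 1) - Q β) x} ⊆ {(0 : X)} := by
      rintro y ⟨β, hβ, rfl⟩
      have hβ1 : β + 1 ≤ κ := by
        rw [Ordinal.add_one_eq_succ]; exact Order.succ_le_of_lt hβ

      rcases h01 x hxA β hβ.le with h1 | h1 <;> rcases h01 x hxA (β + 1) hβ1 with h2 | h2
      · simp only [Set.mem_singleton_iff, ContinuousLinearMap.sub_apply, h1, h2, sub_zero, sub_self]
      · exact absurd h2 (hno β hβ h1)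
      · have := M1 β (β + 1) (by rw [Ordinal.add_one_eq_succ]; exact Order.le_succ β) hβ1 x h1
        rw [this] at h2
        exact absurd h2 hx0
      · simp only [Set.mem_singleton_iff, ContinuousLinearMap.sub_apply, h1, h2, sub_zero, sub_self]
    have hx : x ∈ closure ((Submodule.span ℝ {y : X | ∃ β, β < κ ∧ y = (Q (β + 1) - Q β) x} :
        Submodule ℝ X) : Set X) := hspan x
    have hle : (Submodule.span ℝ {y : X | ∃ β, β < κ ∧ y = (Q (β + 1) - Q β) x}) ≤ ⊥ := by
      rw [Submodule.span_le]
      intro y hy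
      simpa using hsub hy
    have : x ∈ closure ({(0 : X)} : Set X) := by
      refine closure_mono ?_ hx
      intro z hz
      simpa using hle hz
    rw [isClosed_singleton.closure_eq] at this
    exact hx0 (by simpa using this)
  -- the levels
  set L : Ordinal.{u} → Set X :=
    fun β => {x | x ∈ A ∧ x ≠ 0 ∧ Q β x = 0 ∧ Q (β + 1) x = x} with hLdef
  have hLcnt : ∀ β, β < κ → (L β).Countable := by
    intro β hβ
    obtain ⟨g, hg⟩ := stmt17_exists_separating (Set.range ⇑(Q (β + 1) - Q β)) (hsep β hβ)
    have hsub : L β ⊆ ⋃ i, {x | x ∈ A ∧ ((g i).comp (Q (β + 1) - Q β)) x ≠ 0} := by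
      rintro x ⟨hxA, hx0, hxβ, hxβ1⟩
      have hxval : (Q (β + 1) - Q β) x = x := by
        rw [ContinuousLinearMap.sub_apply, hxβ, hxβ1, sub_zero]
      obtain ⟨i, hi⟩ := hg x ⟨x, hxval⟩ hx0
      refine Set.mem_iUnion.2 ⟨i, hxA, ?_⟩
      rw [ContinuousLinearMap.comp_apply, hxval]
      exact hi
    refine Set.Countable.mono hsub (Set.countable_iUnion fun i => ?_)
    exact hsupp ((g i).comp (Q (β + 1) - Q β))
  -- enumerations of the levels
  have hEnum : ∀ β : Ordinal.{u}, ∃ e : ℕ → X, β < κ → (L β).Nonempty → L β = Set.range e := by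
    intro β
    by_cases hβ : β < κ ∧ (L β).Nonempty
    · obtain ⟨e, he⟩ := (hLcnt β hβ.1).exists_eq_range hβ.2
      exact ⟨e, fun _ _ => he⟩
    · exact ⟨fun _ => 0, fun h1 h2 => absurd ⟨h1, h2⟩ hβ⟩
  choose E hE using hEnum
  -- levels are pairwise disjoint on nonzero vectors
  have hdisj : ∀ x : X, x ≠ 0 → ∀ β β', β ≤ κ → β' ≤ κ → x ∈ L β → x ∈ L β' → β = β' := by
    have key : ∀ x : X, x ≠ 0 → ∀ β β', β < β' → β' ≤ κ → x ∈ L β → x ∈ L β' → False := by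
      intro x hx0 β β' hββ' hβ'κ hxβ hxβ'
      have h1 : β + 1 ≤ β' := by
        rw [Ordinal.add_one_eq_succ]; exact Order.succ_le_of_lt hββ'
      have h2 : Q β' x = x := M1 (β + 1) β' h1 hβ'κ x hxβ.2.2.2
      rw [hxβ'.2.2.1] at h2
      exact hx0 h2.symm
    intro x hx0 β β' hβκ hβ'κ hxβ hxβ'
    rcases lt_trichotomy β β' with h | h | h
    · exact absurd (key x hx0 β β' h hβ'κ hxβ hxβ') not_false
    · exact h
    · exact absurd (key x hx0 β' β h hβκ hxβ' hxβ) not_false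
  -- the decomposition of A coming from (c) with ε = 1
  obtain ⟨B, hBA, hBsh⟩ := hshr 1 one_pos
  have hBn : ∀ n, B n ⊆ A := fun n x hx => hBA ▸ Set.mem_iUnion.2 ⟨n, hx⟩
  -- the pieces
  set S : ℕ → Set X := fun k => {x | ∃ β, β < κ ∧ x ∈ L β ∧ x = E β k} with hSdef
  set C : ℕ × ℕ → Set X := fun p => B p.1 ∩ S p.2 with hCdef
  set w : ℕ × ℕ → ℝ := fun p => (2⁻¹ : ℝ) ^ (p.1 + p.2) with hwdef
  have hwpos : ∀ p, 0 < w p := fun p => pow_pos (by norm_num) _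
  have hCA : ∀ p, C p ⊆ A := fun p x hx => hBn p.1 hx.1
  -- uniqueness within a piece at a given level
  have huniq : ∀ (k : ℕ) (β : Ordinal.{u}), β < κ → ∀ x, x ∈ S k → x ∈ L β → x = E β k := by
    intro k β hβ x hxS hxL
    obtain ⟨β', hβ', hxL', hxe⟩ := hxS
    have hββ' : β = β' := hdisj x hxL.2.1 β β' hβ.le hβ'.le hxL hxL'
    rw [hββ']
    exact hxe
  -- the pieces cover A ∖ {0}
  have hcover : ∀ x ∈ A, x ≠ 0 → ∃ p : ℕ × ℕ, x ∈ C p := by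
    intro x hxA hx0
    have hxU : x ∈ ⋃ n, B n := hBA ▸ hxA
    obtain ⟨n, hn⟩ := Set.mem_iUnion.1 hxU
    obtain ⟨γ, hγκ, hγ0, hγ1⟩ := F1 x hxA hx0
    have hxL : x ∈ L γ := ⟨hxA, hx0, hγ0, hγ1⟩
    have hLne : (L γ).Nonempty := ⟨x, hxL⟩
    have hrange := hE γ hγκ hLne
    have : x ∈ Set.range (E γ) := hrange ▸ hxL
    obtain ⟨k, hk⟩ := this
    exact ⟨(n, k), hn, ⟨γ, hγκ, hxL, hk.symm⟩⟩
  -- pointwise bound for rho arguments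
  have hbd : ∀ (f : StrongDual ℝ X) (α α' : Ordinal.{u}), α ≤ κ → α' ≤ κ →
      ∀ x ∈ A, |f.comp (Q α) x - f.comp (Q α') x| ≤ 2 * ‖f‖ := by
    intro f α α' hα hα' x hx
    have h1 : |f (Q α x)| ≤ ‖f‖ := by
      calc |f (Q α x)| ≤ ‖f‖ * ‖Q α x‖ := f.le_opNorm _
        _ ≤ ‖f‖ * 1 := by
            exact mul_le_mul_of_nonneg_left (hQA x hx α hα) (norm_nonneg f)
        _ = ‖f‖ := mul_one _
    have h2 : |f (Q α' x)| ≤ ‖f‖ := by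
      calc |f (Q α' x)| ≤ ‖f‖ * ‖Q α' x‖ := f.le_opNorm _
        _ ≤ ‖f‖ * 1 := by
            exact mul_le_mul_of_nonneg_left (hQA x hx α' hα') (norm_nonneg f)
        _ = ‖f‖ := mul_one _
    calc |f.comp (Q α) x - f.comp (Q α') x| ≤ |f (Q α x)| + |f (Q α' x)| := abs_sub _ _
      _ ≤ 2 * ‖f‖ := by linarith
  -- zero-shrinking : the key self-improvement via scaling
  have hsh0 : ∀ (n : ℕ) (f : StrongDual ℝ X) (δ : ℝ), 0 < δ →
      ∀ g : ℕ → Ordinal.{u}, Monotone g → (∀ m, g m ≤ κ) → ∀ s, s ≤ κ →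
      IsLUB (Set.range g) s →
      ∀ᶠ m in atTop, rho (B n) (f.comp (Q (g m))) (f.comp (Q s)) < δ := by
    intro n f δ hδ g hgmono hgκ s hsκ hlub
    by_cases hf : f = 0
    · refine Filter.Eventually.of_forall fun m => lt_of_le_of_lt ?_ hδ
      refine stmt17_rho_le le_rfl fun x hx => ?_
      simp [hf]
    · obtain ⟨t, ht⟩ := exists_nat_gt (2 / δ)
      set T : ℝ := (t : ℝ) + 1 with hTdef
      have hT0 : (0 : ℝ) < T := by positivity
      have hTδ : 2 / T < δ := by
        rw [div_lt_iff₀ hT0]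
        have h2δ : 2 / δ < T := by
          calc (2 : ℝ) / δ < t := ht
            _ < T := by rw [hTdef]; linarith
        calc (2 : ℝ) = (2 / δ) * δ := by field_simp
          _ < T * δ := by
              exact mul_lt_mul_of_pos_right h2δ hδ
          _ = δ * T := mul_comm _ _
      set f' : StrongDual ℝ X := T • f with hf'def
      have hf' : f' ≠ 0 := by
        intro h
        apply hf
        have h2 := congrArg (fun z : StrongDual ℝ X => T⁻¹ • z) h
        simpa [hf'def, smul_smul, inv_mul_cancel₀ hT0.ne'] using h2
      have hshrink := hBsh n f' hf'
      set ghat : ℕ → {α : Ordinal.{u} // α ≤ κ} := fun m => ⟨g m, hgκ m⟩ with hghat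
      have hghatmono : Monotone ghat := fun a b hab => Subtype.mk_le_mk.2 (hgmono hab)
      have hlub' := stmt17_isLUB_subtype hgκ hsκ hlub
      have hlim := hshrink ghat hghatmono ⟨s, hsκ⟩ hlub'
      have hlim' : Filter.limsup
          (fun m => rho (B n) (f'.comp (Q (g m))) (f'.comp (Q s))) atTop ≤ 1 := by
        have e1 : (1 / ‖f'‖) * ‖f'‖ = 1 := by
          rw [div_mul_cancel₀]
          exact norm_ne_zero_iff.2 hf'
      -- `spriFam κ Q (ghat m) = Q (g m)` definitionally
        rw [e1] at hlim
        exact hlim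
      have hbdd : Filter.IsBoundedUnder (· ≤ ·) atTop
          (fun m => rho (B n) (f'.comp (Q (g m))) (f'.comp (Q s))) := by
        refine Filter.isBoundedUnder_of ⟨2 * ‖f'‖, fun m => ?_⟩
        refine stmt17_rho_le (by positivity) fun x hx => ?_
        exact hbd f' (g m) s (hgκ m) hsκ x (hBn n hx)
      have hev : ∀ᶠ m in atTop,
          rho (B n) (f'.comp (Q (g m))) (f'.comp (Q s)) < 2 :=
        Filter.eventually_lt_of_limsup_lt (lt_of_le_of_lt hlim' one_lt_two) hbdd
      refine hev.mono fun m hm => ?_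
      have hle : rho (B n) (f.comp (Q (g m))) (f.comp (Q s)) ≤
          rho (B n) (f'.comp (Q (g m))) (f'.comp (Q s)) / T := by
        refine stmt17_rho_le (div_nonneg stmt17_rho_nonneg hT0.le) fun x hx => ?_
        have h1 : |f'.comp (Q (g m)) x - f'.comp (Q s) x| ≤
            rho (B n) (f'.comp (Q (g m))) (f'.comp (Q s)) :=
          stmt17_le_rho (fun y hy => hbd f' (g m) s (hgκ m) hsκ y (hBn n hy)) hx
        have h2 : |f'.comp (Q (g m)) x - f'.comp (Q s) x| =
            T * |f.comp (Q (g m)) x - f.comp (Q s) x| := by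
          have : f'.comp (Q (g m)) x - f'.comp (Q s) x =
              T * (f.comp (Q (g m)) x - f.comp (Q s) x) := by
            simp [hf'def, ContinuousLinearMap.comp_apply]
            ring
          rw [this, abs_mul, abs_of_pos hT0]
        rw [h2] at h1
        rw [le_div_iff₀ hT0]
        linarith
      calc rho (B n) (f.comp (Q (g m))) (f.comp (Q s)) ≤ _ / T := hle
        _ < 2 / T := by apply div_lt_div_of_pos_right hm hT0
        _ < δ := hTδ
  -- the core lemma : along any ultrafilter concentrated on a piece, all functionals converge
  have core : ∀ (p : ℕ × ℕ) (U : Ultrafilter X), ↑(C p) ∈ U →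
      ∃ x0, x0 ∈ C p ∪ ({0} : Set X) ∧
        ∀ f : StrongDual ℝ X, Tendsto (fun y : X => f y) U (nhds (f x0)) := by
    intro p U hCU
    set T' : Set Ordinal.{u} := {α | α ≤ κ ∧ {y : X | Q α y = y} ∈ U} with hT'def
    have hκT : κ ∈ T' := ⟨le_rfl, Filter.univ_mem' fun y => hQκ' y⟩
    set σ : Ordinal.{u} := sInf T' with hσdef
    have hσT : σ ∈ T' := csInf_mem ⟨κ, hκT⟩
    have hσκ : σ ≤ κ := hσT.1
    have hUσ : {y : X | Q σ y = y} ∈ U := hσT.2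
    have hmin : ∀ α, α < σ → {y : X | Q α y = y} ∉ U := by
      intro α hα hmem
      have : σ ≤ α := csInf_le (OrderBot.bddBelow T') ⟨hα.le.trans hσκ, hmem⟩
      exact absurd this (not_le.2 hα)
    rcases Ordinal.zero_or_succ_or_isSuccLimit σ with hσ0 | ⟨β, hσβ⟩ | hσlim
    · -- case σ = 0 : the ultrafilter is principal at 0
      refine ⟨0, Or.inr rfl, fun f => ?_⟩
      have h0 : {y : X | y = 0} ∈ U := by
        refine Filter.mem_of_superset hUσ fun y hy => ?_
        have h2 : Q σ y = y := hy
        rw [hσ0] at h2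
        show y = 0
        rw [← h2]
        exact hQ0' y
      refine Filter.Tendsto.congr' ?_ tendsto_const_nhds
      filter_upwards [h0] with y hy
      have hy' : y = 0 := hy
      rw [hy']
    · -- case σ = β + 1 : the ultrafilter is principal at one point of the piece
      have hβσ : β < σ := by rw [← hσβ]; exact Order.lt_succ β
      have hβκ : β < κ := lt_of_lt_of_le hβσ hσκ
      have hσβ1 : σ = β + 1 := by rw [← hσβ, Ordinal.add_one_eq_succ]
      set W : Set X := C p ∩ {y : X | Q σ y = y} ∩ {y : X | Q β y = y}ᶜ with hWdef
      have hWU : W ∈ U := by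
        refine Filter.inter_mem (Filter.inter_mem hCU hUσ) ?_
        exact (Ultrafilter.compl_mem_iff_notMem).2 (hmin β hβσ)
      have hWL : ∀ y ∈ W, y ∈ L β ∧ y ∈ S p.2 := by
        rintro y ⟨⟨hyC, hyσ⟩, hyβ⟩
        have hyA : y ∈ A := hCA p hyC
        have hy0 : y ≠ 0 := by
          intro h
          apply hyβ
          show Q β y = y
          rw [h, map_zero]
        have hQβy : Q β y = 0 := by
          rcases h01 y hyA β hβκ.le with h | h
          · exact h
          · exact absurd h hyβ
        have hQσy : Q (β + 1) y = y := by rw [← hσβ1]; exact hyσ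
        exact ⟨⟨hyA, hy0, hQβy, hQσy⟩, hyC.2⟩
      obtain ⟨y0, hy0W⟩ := U.nonempty_of_mem hWU
      have hy0e : y0 = E β p.2 :=
        huniq p.2 β hβκ y0 (hWL y0 hy0W).2 (hWL y0 hy0W).1
      have hWsub : W ⊆ {y0} := by
        intro y hyW
        have : y = E β p.2 := huniq p.2 β hβκ y (hWL y hyW).2 (hWL y hyW).1
        rw [Set.mem_singleton_iff, this, ← hy0e]
      refine ⟨y0, Or.inl ?_, fun f => ?_⟩
      · exact hy0W.1.1
      · refine Filter.Tendsto.congr' ?_ tendsto_const_nhds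
        filter_upwards [hWU] with y hy
        rw [hWsub hy]
    · -- case σ limit : the ultrafilter converges weakly to 0
      refine ⟨0, Or.inr rfl, fun f => ?_⟩
      rw [map_zero]
      by_cases hcof : σ.cof ≤ Cardinal.aleph0
      · -- countable cofinality : use the shrinking property
        obtain ⟨ι, q, hlsub, hcard⟩ := Ordinal.exists_lsub_cof σ
        have hcnt : Countable ι := Cardinal.mk_le_aleph0_iff.1 (hcard ▸ hcof)
        have hιne : Nonempty ι := by
          by_contra h
          rw [not_nonempty_iff] at h
          have : σ = 0 := by rw [← hlsub, Ordinal.lsub_empty]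
          exact hσlim.pos.ne' this
        obtain ⟨r, hr⟩ := exists_surjective_nat ι
        set g : ℕ → Ordinal.{u} := fun m => (Finset.range (m + 1)).sup (fun j => q (r j))
          with hgdef
        have hgmono : Monotone g := by
          intro a b hab
          exact Finset.sup_mono (Finset.range_subset_range.2 (by omega))
        have hgσ : ∀ m, g m < σ := by
          intro m
          rw [hgdef]
          refine Finset.sup_lt_iff ?_ |>.2 fun j _ => ?_
          · exact hσlim.pos
          · rw [← hlsub]; exact Ordinal.lt_lsub q (r j)
        have hgκ : ∀ m, g m ≤ κ := fun m => (hgσ m).le.trans hσκ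
        have hlub : IsLUB (Set.range g) σ := by
          constructor
          · rintro a ⟨m, rfl⟩
            exact (hgσ m).le
          · intro u hu
            by_contra hus
            push_neg at hus
            have huσ : Order.succ u < σ := hσlim.succ_lt hus
            have : σ ≤ Order.succ u := by
              rw [← hlsub]
              refine Ordinal.lsub_le fun i => ?_
              obtain ⟨j, rfl⟩ := hr i
              have h1 : q (r j) ≤ g j := by
                rw [hgdef]
                exact Finset.le_sup (f := fun j => q (r j)) (Finset.self_mem_range_succ j)
              have h2 : g j ≤ u := hu ⟨j, rfl⟩
              exact lt_of_le_of_lt (h1.trans h2) (Order.lt_succ u)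
            exact absurd this (not_le.2 huσ)
        rw [Metric.tendsto_nhds]
        intro ε hε
        have hev := hsh0 p.1 f ε hε g hgmono hgκ σ hσκ hlub
        obtain ⟨m0, hm0⟩ := hev.exists
        have hUg : {y : X | Q (g m0) y = y}ᶜ ∈ U :=
          (Ultrafilter.compl_mem_iff_notMem).2 (hmin (g m0) (hgσ m0))
        filter_upwards [hCU, hUσ, hUg] with y hyC hyσ hyg
        have hyA : y ∈ A := hCA p hyC
        have hQg : Q (g m0) y = 0 := by
          rcases h01 y hyA (g m0) (hgκ m0) with h | h
          · exact h
          · exact absurd h hyg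
        have hyB : y ∈ B p.1 := hyC.1
        have h1 : |f.comp (Q (g m0)) y - f.comp (Q σ) y| ≤
            rho (B p.1) (f.comp (Q (g m0))) (f.comp (Q σ)) :=
          stmt17_le_rho (fun z hz => hbd f (g m0) σ (hgκ m0) hσκ z (hBn p.1 hz)) hyB
        have h2 : |f.comp (Q (g m0)) y - f.comp (Q σ) y| = |f y| := by
          rw [ContinuousLinearMap.comp_apply, ContinuousLinearMap.comp_apply, hQg, hyσ,
            map_zero, zero_sub, abs_neg]
        rw [h2] at h1
        rw [Real.dist_eq, sub_zero]
        exact lt_of_le_of_lt h1 hm0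
      · -- uncountable cofinality : use countable supports
        have hℵ : Cardinal.aleph0 < σ.cof := not_le.1 hcof
        have hzero : {y : X | f y = 0} ∈ U := by
          by_contra hnmem
          have hfne : {y : X | f y = 0}ᶜ ∈ U := (Ultrafilter.compl_mem_iff_notMem).2 hnmem
          set M : Set X := C p ∩ {y : X | Q σ y = y} ∩ {y : X | f y = 0}ᶜ with hMdef
          have hMU : M ∈ U := Filter.inter_mem (Filter.inter_mem hCU hUσ) hfne
          have hMc : M.Countable := by
            refine (hsupp f).mono fun y hy => ?_
            exact ⟨hCA p hy.1.1, hy.2⟩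
          have hlev : ∀ y : ↥M, ∃ γ : Ordinal.{u}, γ < σ ∧ Q (γ + 1) (y : X) = y := by
            rintro ⟨y, ⟨hyC, hyσ⟩, hyf⟩
            have hyA : y ∈ A := hCA p hyC
            have hy0 : y ≠ 0 := by
              intro h
              apply hyf
              show f y = 0
              rw [h, map_zero]
            obtain ⟨γ, hγκ, hγ0, hγ1⟩ := F1 y hyA hy0
            have hγσ : γ < σ := by
              by_contra h
              push_neg at h
              have := M1 σ γ h hγκ.le y hyσ
              rw [hγ0] at this
              exact hy0 this.symm
            exact ⟨γ, hγσ, hγ1⟩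
          choose γf hγf1 hγf2 using hlev
          have hsmall : Cardinal.mk ↥M < σ.cof := by
            refine lt_of_le_of_lt ?_ hℵ
            exact Cardinal.mk_le_aleph0_iff.2 hMc.to_subtype
          set δ : Ordinal.{u} := ⨆ y : ↥M, (γf y + 1) with hδdef
          have hδσ : δ < σ := by
            refine Ordinal.iSup_lt_ord hsmall fun y => ?_
            rw [Ordinal.add_one_eq_succ]
            exact hσlim.succ_lt (hγf1 y)
          have hδU : {y : X | Q δ y = y} ∈ U := by
            refine Filter.mem_of_superset hMU fun y hy => ?_
            have h1 : γf ⟨y, hy⟩ + 1 ≤ δ := Ordinal.le_iSup (fun y : ↥M => γf y + 1) ⟨y, hy⟩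
            exact M1 (γf ⟨y, hy⟩ + 1) δ h1 (hδσ.le.trans hσκ) y (hγf2 ⟨y, hy⟩)
          exact hmin δ hδσ hδU
        refine Filter.Tendsto.congr' ?_ tendsto_const_nhds
        filter_upwards [hzero] with y hy
        exact hy.symm
  -- the generating set
  set K : Set X := insert (0 : X) (⋃ p : ℕ × ℕ, w p • C p) with hKdef
  -- linear density of K
  have hKdense : LinearlyDense K := by
    have hsub : (Submodule.span ℝ A : Set X) ⊆ (Submodule.span ℝ K : Set X) := by
      refine Submodule.span_le.2 fun x hx => ?_
      by_cases hx0 : x = 0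
      · rw [hx0]; exact Submodule.zero_mem _
      · obtain ⟨p, hp⟩ := hcover x hx hx0
        have h1 : w p • x ∈ K := by
          refine Set.mem_insert_iff.2 (Or.inr ?_)
          exact Set.mem_iUnion.2 ⟨p, Set.smul_mem_smul_set hp⟩
        have h2 : w p • x ∈ Submodule.span ℝ K := Submodule.subset_span h1
        have h3 : (w p)⁻¹ • (w p • x) ∈ Submodule.span ℝ K := Submodule.smul_mem _ _ h2
        rwa [smul_smul, inv_mul_cancel₀ (hwpos p).ne', one_smul] at h3
    exact hdense.mono hsub
  -- weak compactness of K
  have hKcomp : IsCompact (⇑(toWeakSpace ℝ X) '' K) := by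
    rw [isCompact_iff_ultrafilter_le_nhds]
    intro U hU
    have hKU : (⇑(toWeakSpace ℝ X) '' K) ∈ U := Filter.le_principal_iff.1 hU
    have himg : ⇑(toWeakSpace ℝ X) '' K = (K : Set (WeakSpace ℝ X)) := by
      ext y
      constructor
      · rintro ⟨x, hx, rfl⟩; exact hx
      · intro hy; exact ⟨y, hy, rfl⟩
    rw [himg] at hKU
    -- view U as an ultrafilter on X
    obtain ⟨uX, huX⟩ : ∃ uX : Ultrafilter X, (uX : Filter X) = (U : Filter (WeakSpace ℝ X)) :=
      ⟨U, rfl⟩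
    have hKU' : K ∈ uX := by
      rw [← Ultrafilter.mem_coe, huX]
      exact hKU
    by_cases hex : ∃ p : ℕ × ℕ, ↑(w p • C p) ∈ uX
    · obtain ⟨p, hp⟩ := hex
      set U' : Ultrafilter X := Ultrafilter.map (fun y : X => (w p)⁻¹ • y) uX with hU'def
      have hp' : C p ∈ U' := by
        rw [hU'def]
        rw [Ultrafilter.mem_map]
        refine Filter.mem_of_superset hp fun y hy => ?_
        obtain ⟨x, hx, rfl⟩ := hy
        show (w p)⁻¹ • w p • x ∈ C p
        rwa [smul_smul, inv_mul_cancel₀ (hwpos p).ne', one_smul]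
      obtain ⟨x0, hx0mem, hx0t⟩ := core p U' hp'
      have hmemK : w p • x0 ∈ K := by
        rcases hx0mem with h | h
        · exact Set.mem_insert_iff.2 (Or.inr (Set.mem_iUnion.2 ⟨p, Set.smul_mem_smul_set h⟩))
        · rw [Set.mem_singleton_iff.1 h, smul_zero]
          exact Set.mem_insert _ _
      refine ⟨toWeakSpace ℝ X (w p • x0), ?_, ?_⟩
      · rw [himg]; exact hmemK
      · refine stmt17_weak_le_nhds (U : Filter (WeakSpace ℝ X)) (w p • x0) fun f => ?_
        rw [← huX]
        have h1 : Tendsto (fun y : X => f ((w p)⁻¹ • y)) (uX : Filter X) (nhds (f x0)) := by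
          have := hx0t f
          rwa [hU'def, Ultrafilter.coe_map, Filter.tendsto_map'_iff] at this
        have h2 : Tendsto (fun y : X => w p * f ((w p)⁻¹ • y)) (uX : Filter X) (nhds (w p * f x0)) :=
          h1.const_mul (w p)
        have h3 : (fun y : X => w p * f ((w p)⁻¹ • y)) = fun y : X => f y := by
          funext y
          rw [map_smul, smul_eq_mul, ← mul_assoc, mul_inv_cancel₀ (hwpos p).ne', one_mul]
        have h4 : f (w p • x0) = w p * f x0 := by
          rw [map_smul, smul_eq_mul]
        rw [h3] at h2
        rw [h4]
        exact h2
    · push_neg at hex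
      refine ⟨toWeakSpace ℝ X 0, ?_, ?_⟩
      · rw [himg]; exact Set.mem_insert _ _
      · refine stmt17_weak_le_nhds (U : Filter (WeakSpace ℝ X)) 0 fun f => ?_
        rw [← huX, map_zero, Metric.tendsto_nhds]
        intro ε hε
        have hεf : 0 < ε / (‖f‖ + 1) := by positivity
        obtain ⟨m0, hm0⟩ := exists_pow_lt_of_lt_one hεf (by norm_num : (2⁻¹ : ℝ) < 1)
        set J : Finset (ℕ × ℕ) := Finset.range (m0 + 1) ×ˢ Finset.range (m0 + 1) with hJdef
        have hcompl : (⋂ q ∈ J, (↑(w q • C q) : Set X)ᶜ) ∈ uX := by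
          refine (Filter.biInter_finset_mem J).2 fun q _ => ?_
          exact (Ultrafilter.compl_mem_iff_notMem).2 (hex q)
        refine Filter.mem_of_superset (Filter.inter_mem hKU' hcompl) ?_
        rintro y ⟨hyK, hyc⟩
        show dist (f y) 0 < ε
        rw [Real.dist_eq, sub_zero]
        rcases Set.mem_insert_iff.1 hyK with rfl | hy
        · rw [map_zero, abs_zero]; exact hε
        · obtain ⟨p, hyp⟩ := Set.mem_iUnion.1 hy
          have hpJ : p ∉ J := by
            intro hpJ
            have := Set.mem_iInter₂.1 hyc p hpJ
            exact this hyp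
          have hm0p : m0 + 1 ≤ p.1 + p.2 := by
            rw [hJdef, Finset.mem_product, Finset.mem_range, Finset.mem_range] at hpJ
            push_neg at hpJ
            omega
          obtain ⟨x, hx, rfl⟩ := hyp
          have hxA : x ∈ A := hCA p hx
          have hfy : |f (w p • x)| ≤ ‖f‖ * w p := by
            calc |f (w p • x)| ≤ ‖f‖ * ‖w p • x‖ := f.le_opNorm _
              _ = ‖f‖ * (w p * ‖x‖) := by
                  rw [norm_smul, Real.norm_eq_abs, abs_of_pos (hwpos p)]
              _ ≤ ‖f‖ * (w p * 1) := by
                  refine mul_le_mul_of_nonneg_left ?_ (norm_nonneg f)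
                  exact mul_le_mul_of_nonneg_left (hA1 x hxA) (hwpos p).le
              _ = ‖f‖ * w p := by rw [mul_one]
          have hwp : w p ≤ (2⁻¹ : ℝ) ^ m0 := by
            rw [hwdef]
            refine pow_le_pow_of_le_one (by norm_num) (by norm_num) ?_
            omega
          calc |f (w p • x)| ≤ ‖f‖ * w p := hfy
            _ ≤ ‖f‖ * (2⁻¹ : ℝ) ^ m0 := mul_le_mul_of_nonneg_left hwp (norm_nonneg f)
            _ ≤ (‖f‖ + 1) * (2⁻¹ : ℝ) ^ m0 := by
                refine mul_le_mul_of_nonneg_right (by linarith) (by positivity)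
            _ < (‖f‖ + 1) * (ε / (‖f‖ + 1)) := by
                refine mul_lt_mul_of_pos_left hm0 (by positivity)
            _ = ε := by field_simp
  exact ⟨⟨X, ⟨K, hKdense, hKcomp⟩, LinearIsometry.id⟩⟩
end
end

section
/- Let X be a real Banach space, C ≥ 1, V a closed linear subspace of X, and E ⊂ X* a set that is C-norming for V, i.e., ‖x‖ ≤ C · sup{|d(x)|/‖d‖ : d ∈ E, d ≠ 0} for every x ∈ V. Then: (i) V ∩ E_⊥ = {0}; (ii) V + E_⊥ is a closed linear subspace of X, and the map sending u + v to u (for u ∈ V, v ∈ E_⊥) is a well-defined bounded linear projection of V + E_⊥ onto V of norm at most C. -/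
open Set Filter Topology

noncomputable section

universe u v w

open scoped Classical

lemma stmt18_key {X : Type u} [NormedAddCommGroup X] [NormedSpace ℝ X]
    (C : ℝ) (hC : 1 ≤ C) (V : Submodule ℝ X)
    (D : Set (StrongDual ℝ X)) (hNorm : IsCNorming C D (V : Set X))
    {u v : X} (hu : u ∈ V) (hv : v ∈ preAnn D) : ‖u‖ ≤ C * ‖u + v‖ := by
  have h0 : (0:ℝ) ≤ C := le_trans zero_le_one hC
  refine (hNorm u hu).trans ?_
  refine mul_le_mul_of_nonneg_left ?_ h0
  refine Real.iSup_le ?_ (norm_nonneg _)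
  rintro ⟨d, hdD, hd0⟩
  have hdv : d v = 0 := by
    have h := Submodule.mem_iInf (fun d : D => LinearMap.ker ((d.1 : X →L[ℝ] ℝ) : X →ₗ[ℝ] ℝ)) |>.mp hv ⟨d, hdD⟩
    simpa using h
  have hnd : 0 < ‖d‖ := norm_pos_iff.mpr hd0
  rw [div_le_iff₀ hnd]
  calc |d u| = |d (u + v)| := by rw [map_add, hdv, add_zero]
    _ ≤ ‖d‖ * ‖u + v‖ := d.le_opNorm _
    _ = ‖u + v‖ * ‖d‖ := mul_comm _ _

lemma stmt18_zero {X : Type u} [NormedAddCommGroup X] [NormedSpace ℝ X]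
    (C : ℝ) (hC : 1 ≤ C) (V : Submodule ℝ X)
    (D : Set (StrongDual ℝ X)) (hNorm : IsCNorming C D (V : Set X))
    {x : X} (hx : x ∈ V) (hx' : x ∈ preAnn D) : x = 0 := by
  have h := stmt18_key C hC V D hNorm hx (Submodule.neg_mem _ hx')
  simp only [add_neg_cancel, norm_zero, mul_zero] at h
  exact norm_le_zero_iff.mp h

/-- (Lemma 3.9(i)-(ii) of the paper.) If `D ⊆ X*` is `C`-norming for a closed
subspace `V`, then `V ∩ D_⊥ = {0}`, `V + D_⊥` is closed, and the map `u + v ↦ u` is a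
well-defined bounded linear projection of `V + D_⊥` onto `V` of norm at most `C`. -/
theorem stmt18 {X : Type u} [NormedAddCommGroup X] [NormedSpace ℝ X] [CompleteSpace X]
    (C : ℝ) (hC : 1 ≤ C) (V : Submodule ℝ X) (hV : IsClosed (V : Set X))
    (D : Set (StrongDual ℝ X)) (hNorm : IsCNorming C D (V : Set X)) :
    -- (i)
    ((V : Set X) ∩ (preAnn D : Set X) = {0}) ∧
    -- (ii)
    IsClosed ((V ⊔ preAnn D : Submodule ℝ X) : Set X) ∧
    ∃ P : ↥(V ⊔ preAnn D) →L[ℝ] X,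
      (∀ u v : X, ∀ hu : u ∈ V, ∀ hv : v ∈ preAnn D,
        P ⟨u + v, Submodule.add_mem_sup hu hv⟩ = u) ∧
      (∀ w : ↥(V ⊔ preAnn D), P w ∈ V ∧ (w : X) - P w ∈ preAnn D) ∧
      Set.range ⇑P = (V : Set X) ∧ ‖P‖ ≤ C := by
  have h0 : (0:ℝ) ≤ C := le_trans zero_le_one hC
  have huniq : ∀ u v u' v' : X, u ∈ V → v ∈ preAnn D → u' ∈ V → v' ∈ preAnn D →
      u + v = u' + v' → u = u' := by
    intro u v u' v' hu hv hu' hv' heq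
    have h1 : u - u' ∈ V := Submodule.sub_mem _ hu hu'
    have h2 : u - u' ∈ preAnn D := by
      have he : u - u' = v' - v := by rw [sub_eq_sub_iff_add_eq_add, heq, add_comm]
      rw [he]; exact Submodule.sub_mem _ hv' hv
    have := stmt18_zero C hC V D hNorm h1 h2
    exact sub_eq_zero.mp this
  choose f hfV g hg hsum using fun w : ↥(V ⊔ preAnn D) => Submodule.mem_sup.mp w.2
  have hchar : ∀ w : ↥(V ⊔ preAnn D), ∀ u' v' : X, u' ∈ V → v' ∈ preAnn D →
      (w : X) = u' + v' → f w = u' := by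
    intro w u' v' hu' hv' he
    exact huniq (f w) (g w) u' v' (hfV w) (hg w) hu' hv' (by rw [hsum w, he])
  have hadd : ∀ w w' : ↥(V ⊔ preAnn D), f (w + w') = f w + f w' := by
    intro w w'
    refine hchar _ _ (g w + g w') (Submodule.add_mem _ (hfV w) (hfV w'))
      (Submodule.add_mem _ (hg w) (hg w')) ?_
    push_cast
    rw [← hsum w, ← hsum w']; abel
  have hsmul : ∀ (c : ℝ) (w : ↥(V ⊔ preAnn D)), f (c • w) = c • f w := by
    intro c w
    refine hchar _ _ (c • g w) (Submodule.smul_mem _ _ (hfV w))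
      (Submodule.smul_mem _ _ (hg w)) ?_
    push_cast
    rw [← hsum w, smul_add]
  have hbound : ∀ w : ↥(V ⊔ preAnn D), ‖f w‖ ≤ C * ‖w‖ := by
    intro w
    have := stmt18_key C hC V D hNorm (hfV w) (hg w)
    rwa [hsum w] at this
  let L : ↥(V ⊔ preAnn D) →ₗ[ℝ] X :=
    { toFun := f, map_add' := hadd, map_smul' := hsmul }
  let P : ↥(V ⊔ preAnn D) →L[ℝ] X := L.mkContinuous C hbound
  have hPapp : ∀ w, P w = f w := fun w => rfl
  have hP1 : ∀ u v : X, ∀ hu : u ∈ V, ∀ hv : v ∈ preAnn D,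
      P ⟨u + v, Submodule.add_mem_sup hu hv⟩ = u := by
    intro u v hu hv
    rw [hPapp]
    exact hchar _ u v hu hv rfl
  have hP2 : ∀ w : ↥(V ⊔ preAnn D), P w ∈ V ∧ (w : X) - P w ∈ preAnn D := by
    intro w
    refine ⟨hfV w, ?_⟩
    rw [hPapp]
    have : (w : X) - f w = g w := by rw [← hsum w]; abel
    rw [this]; exact hg w
  have hpreClosed : IsClosed ((preAnn D : Submodule ℝ X) : Set X) := by
    have : ((preAnn D : Submodule ℝ X) : Set X) =
        ⋂ d : D, (LinearMap.ker ((d.1 : X →L[ℝ] ℝ) : X →ₗ[ℝ] ℝ) : Set X) := by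
      rw [preAnn, Submodule.coe_iInf]
    rw [this]
    exact isClosed_iInter fun d => ContinuousLinearMap.isClosed_ker (d.1 : X →L[ℝ] ℝ)
  have hclosed : IsClosed ((V ⊔ preAnn D : Submodule ℝ X) : Set X) := by
    refine IsSeqClosed.isClosed ?_
    intro w x hmem hlim
    set W : ℕ → ↥(V ⊔ preAnn D) := fun n => ⟨w n, hmem n⟩ with hW
    have hCW : CauchySeq W := by
      rw [Metric.cauchySeq_iff]
      intro ε hε
      obtain ⟨N, hN⟩ := Metric.cauchySeq_iff.mp hlim.cauchySeq ε hε
      exact ⟨N, fun m hm n hn => by simpa [hW, Subtype.dist_eq] using hN m hm n hn⟩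
    have hCu : CauchySeq fun n => P (W n) := hCW.map P.uniformContinuous
    obtain ⟨u, hu⟩ := cauchySeq_tendsto_of_complete hCu
    have huV : u ∈ V := hV.mem_of_tendsto hu (Filter.Eventually.of_forall fun n => (hP2 (W n)).1)
    have hvlim : Filter.Tendsto (fun n => w n - P (W n)) Filter.atTop (nhds (x - u)) :=
      hlim.sub hu
    have hvmem : x - u ∈ preAnn D := by
      have := hpreClosed.mem_of_tendsto hvlim
        (Filter.Eventually.of_forall fun n => (hP2 (W n)).2)
      exact this
    have : u + (x - u) ∈ V ⊔ preAnn D := Submodule.add_mem_sup huV hvmem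
    simpa using this
  refine ⟨?_, hclosed, P, hP1, hP2, ?_, ?_⟩
  · ext x
    simp only [Set.mem_inter_iff, SetLike.mem_coe, Set.mem_singleton_iff]
    exact ⟨fun ⟨h1, h2⟩ => stmt18_zero C hC V D hNorm h1 h2,
      fun h => h ▸ ⟨Submodule.zero_mem _, Submodule.zero_mem _⟩⟩
  · ext y
    constructor
    · rintro ⟨w, rfl⟩; exact (hP2 w).1
    · intro hy
      exact ⟨⟨y, Submodule.mem_sup_left hy⟩,
        hchar _ y 0 hy (Submodule.zero_mem _) (by simp)⟩
  · exact L.mkContinuous_norm_le h0 hbound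
end
end

section
/- Let X be a real Banach space, C ≥ 1, V a closed linear subspace of X, and E ⊂ X* a set that is C-norming for V, i.e., ‖x‖ ≤ C · sup{|d(x)|/‖d‖ : d ∈ E, d ≠ 0} for every x ∈ V. Then the following conditions are equivalent: (1) V + E_⊥ = X; (2) V separates the points of (E_⊥)^⊥ ⊂ X* (the weak*-closed linear span of E), i.e., for every x* ∈ (E_⊥)^⊥ with x* ≠ 0 there exists v ∈ V with x*(v) ≠ 0; (3) there exists a unique bounded linear projection P : X → X with P[X] = V and ker P = E_⊥; (4) there exists a unique bounded linear projection P : X → X with P[X] = V and d = d ∘ P for every d ∈ E. Moreover, for any bounded linear projection Q : X → X with Q[X] = V, one has ker Q = E_⊥ if and only if d = d ∘ Q for every d ∈ E. -/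
open Set Filter Topology

noncomputable section

universe u v w

open scoped Classical

variable {X : Type u} [NormedAddCommGroup X] [NormedSpace ℝ X]

lemma mem_preAnn' {D : Set (StrongDual ℝ X)} {x : X} :
    x ∈ preAnn D ↔ ∀ d ∈ D, d x = 0 := by
  simp [preAnn, Submodule.mem_iInf, LinearMap.mem_ker, Subtype.forall]

lemma preAnn_closed (D : Set (StrongDual ℝ X)) :
    IsClosed ((preAnn D : Submodule ℝ X) : Set X) := by
  have : ((preAnn D : Submodule ℝ X) : Set X) = ⋂ d : D, (d.1 : X →L[ℝ] ℝ) ⁻¹' {0} := by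
    ext x
    simp [mem_preAnn', Subtype.forall]
  rw [this]
  exact isClosed_iInter fun d => (isClosed_singleton).preimage d.1.continuous

lemma norming_bound {C : ℝ} (hC : 1 ≤ C) {D : Set (StrongDual ℝ X)} {V : Submodule ℝ X}
    (hNorm : IsCNorming C D (V : Set X)) {v w : X} (hv : v ∈ V) (hw : w ∈ preAnn D) :
    ‖v‖ ≤ C * ‖v + w‖ := by
  refine (hNorm v hv).trans ?_
  refine mul_le_mul_of_nonneg_left ?_ (by linarith)
  refine Real.iSup_le (fun d => ?_) (norm_nonneg _)
  have hd0 : d.1 w = 0 := mem_preAnn'.1 hw d.1 d.2.1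
  have hdn : (0:ℝ) < ‖d.1‖ := norm_pos_iff.2 d.2.2
  rw [div_le_iff₀ hdn]
  have : d.1 v = d.1 (v + w) := by simp [hd0]
  rw [this]
  calc |d.1 (v + w)| = ‖d.1 (v + w)‖ := (Real.norm_eq_abs _).symm
    _ ≤ ‖d.1‖ * ‖v + w‖ := d.1.le_opNorm _
    _ = ‖v + w‖ * ‖d.1‖ := mul_comm _ _

lemma norming_disjoint {C : ℝ} (hC : 1 ≤ C) {D : Set (StrongDual ℝ X)} {V : Submodule ℝ X}
    (hNorm : IsCNorming C D (V : Set X)) : V ⊓ preAnn D = ⊥ := by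
  refine eq_bot_iff.2 fun x hx => ?_
  have h := norming_bound hC hNorm hx.1 (Submodule.neg_mem _ hx.2)
  simp at h
  have : ‖x‖ ≤ 0 := by simpa using h
  simpa [Submodule.mem_bot] using norm_le_zero_iff.1 this

lemma sup_closed {C : ℝ} (hC : 1 ≤ C) [CompleteSpace X] {D : Set (StrongDual ℝ X)}
    {V : Submodule ℝ X} (hV : IsClosed (V : Set X)) (hNorm : IsCNorming C D (V : Set X)) :
    IsClosed ((V ⊔ preAnn D : Submodule ℝ X) : Set X) := by
  have hCpos : (0:ℝ) < C := by linarith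
  refine IsSeqClosed.isClosed ?_
  intro x p hx hxp
  choose v hvV w hwW hvw using fun n => Submodule.mem_sup.1 (hx n)
  have hxC : CauchySeq x := hxp.cauchySeq
  have hvC : CauchySeq v := by
    rw [Metric.cauchySeq_iff] at hxC ⊢
    intro ε hε
    obtain ⟨N, hN⟩ := hxC (ε / C) (div_pos hε hCpos)
    refine ⟨N, fun m hm n hn => ?_⟩
    have hb : ‖v m - v n‖ ≤ C * ‖(v m - v n) + (w m - w n)‖ :=
      norming_bound hC hNorm (Submodule.sub_mem _ (hvV m) (hvV n))
        (Submodule.sub_mem _ (hwW m) (hwW n))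
    have he : (v m - v n) + (w m - w n) = x m - x n := by
      rw [← hvw m, ← hvw n]; abel
    rw [he] at hb
    have := hN m hm n hn
    rw [dist_eq_norm] at this ⊢
    calc ‖v m - v n‖ ≤ C * ‖x m - x n‖ := hb
      _ < C * (ε / C) := by exact mul_lt_mul_of_pos_left this hCpos
      _ = ε := mul_div_cancel₀ ε hCpos.ne'
  obtain ⟨l, hl⟩ := cauchySeq_tendsto_of_complete hvC
  have hlV : l ∈ V := hV.mem_of_tendsto hl (Filter.Eventually.of_forall hvV)
  have hwt : Filter.Tendsto (fun n => x n - v n) atTop (nhds (p - l)) := hxp.sub hl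
  have hplW : p - l ∈ preAnn D := by
    refine (preAnn_closed D).mem_of_tendsto hwt (Filter.Eventually.of_forall fun n => ?_)
    have : x n - v n = w n := by rw [← hvw n]; abel
    rw [this]; exact hwW n
  exact Submodule.mem_sup.2 ⟨l, hlV, p - l, hplW, by abel⟩

lemma sep_closed_submodule {W : Submodule ℝ X} (hW : IsClosed (W : Set X)) {x : X}
    (hx : x ∉ W) : ∃ f : X →L[ℝ] ℝ, (∀ w ∈ W, f w = 0) ∧ f x ≠ 0 := by
  obtain ⟨f, u, hfu, hux⟩ :=
    geometric_hahn_banach_closed_point (W.convex) hW hx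
  have hW0 : ∀ w ∈ W, f w = 0 := by
    intro w hw
    by_contra h0
    have key : ∀ t : ℝ, f (t • w) < u := fun t => hfu _ (W.smul_mem t hw)
    have := key ((u + |u| + 1) / f w)
    rw [map_smul] at this
    simp only [smul_eq_mul] at this
    rw [div_mul_cancel₀ _ h0] at this
    have : u + |u| + 1 < u := this
    linarith [abs_nonneg u]
  have h0 : f 0 = 0 := map_zero f
  have : (0:ℝ) < f x := lt_of_le_of_lt (by
    have := hfu 0 W.zero_mem
    linarith [hfu 0 W.zero_mem]) hux
  exact ⟨f, hW0, ne_of_gt this⟩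


/-- (Lemma 3.9, equivalences, of the paper.) For `D ⊆ X*` `C`-norming for a
closed subspace `V`, the four conditions on the existence of the canonical projection are
equivalent, and a projection onto `V` has kernel `D_⊥` iff `d = d ∘ Q` for all `d ∈ D`. -/
theorem stmt19 {X : Type u} [NormedAddCommGroup X] [NormedSpace ℝ X] [CompleteSpace X]
    (C : ℝ) (hC : 1 ≤ C) (V : Submodule ℝ X) (hV : IsClosed (V : Set X))
    (D : Set (StrongDual ℝ X)) (hNorm : IsCNorming C D (V : Set X)) :
    -- (1) ↔ (2)
    ((V ⊔ preAnn D = (⊤ : Submodule ℝ X)) ↔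
      (∀ f ∈ dualAnn ((preAnn D : Submodule ℝ X) : Set X), f ≠ 0 → ∃ v ∈ V, f v ≠ 0)) ∧
    -- (2) ↔ (3)
    ((∀ f ∈ dualAnn ((preAnn D : Submodule ℝ X) : Set X), f ≠ 0 → ∃ v ∈ V, f v ≠ 0) ↔
      (∃! P : X →L[ℝ] X, P.comp P = P ∧ Set.range ⇑P = (V : Set X) ∧
        LinearMap.ker (P : X →ₗ[ℝ] X) = preAnn D)) ∧
    -- (3) ↔ (4)
    ((∃! P : X →L[ℝ] X, P.comp P = P ∧ Set.range ⇑P = (V : Set X) ∧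
        LinearMap.ker (P : X →ₗ[ℝ] X) = preAnn D) ↔
      (∃! P : X →L[ℝ] X, P.comp P = P ∧ Set.range ⇑P = (V : Set X) ∧
        ∀ d ∈ D, d.comp P = d)) ∧
    -- moreover
    (∀ Qp : X →L[ℝ] X, Qp.comp Qp = Qp → Set.range ⇑Qp = (V : Set X) →
      (LinearMap.ker (Qp : X →ₗ[ℝ] X) = preAnn D ↔ ∀ d ∈ D, d.comp Qp = d)) := by
  have hdisj : V ⊓ preAnn D = ⊥ := norming_disjoint hC hNorm
  have hsupcl : IsClosed ((V ⊔ preAnn D : Submodule ℝ X) : Set X) := sup_closed hC hV hNorm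
  have hpacl := preAnn_closed D
  -- moreover
  have hMo : ∀ Qp : X →L[ℝ] X, Qp.comp Qp = Qp → Set.range ⇑Qp = (V : Set X) →
      (LinearMap.ker (Qp : X →ₗ[ℝ] X) = preAnn D ↔ ∀ d ∈ D, d.comp Qp = d) := by
    intro Qp hQQ hQr
    constructor
    · intro hker d hd
      ext x
      have hxk : x - Qp x ∈ LinearMap.ker (Qp : X →ₗ[ℝ] X) := by
        have := ContinuousLinearMap.ext_iff.1 hQQ x
        simp only [ContinuousLinearMap.comp_apply] at this
        simp [LinearMap.mem_ker, map_sub, this]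
      rw [hker] at hxk
      have h0 : d (x - Qp x) = 0 := mem_preAnn'.1 hxk d hd
      have : d x - d (Qp x) = 0 := by simpa [map_sub] using h0
      simp only [ContinuousLinearMap.comp_apply]
      linarith
    · intro hcomp
      apply le_antisymm
      · intro x hx
        rw [LinearMap.mem_ker, ContinuousLinearMap.coe_coe] at hx
        refine mem_preAnn'.2 fun d hd => ?_
        have hdx : d (Qp x) = d x := ContinuousLinearMap.ext_iff.1 (hcomp d hd) x
        rw [← hdx, hx, map_zero]
      · intro x hx
        rw [LinearMap.mem_ker]
        have h1 : Qp x ∈ V := by rw [← SetLike.mem_coe, ← hQr]; exact Set.mem_range_self x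
        have h2 : Qp x ∈ preAnn D := mem_preAnn'.2 fun d hd => by
          have hdx : d (Qp x) = d x := ContinuousLinearMap.ext_iff.1 (hcomp d hd) x
          rw [hdx]; exact mem_preAnn'.1 hx d hd
        have hm : Qp x ∈ V ⊓ preAnn D := ⟨h1, h2⟩
        rw [hdisj] at hm
        simpa using hm
  -- (1) ↔ (3)
  have h13 : (V ⊔ preAnn D = (⊤ : Submodule ℝ X)) ↔
      (∃! P : X →L[ℝ] X, P.comp P = P ∧ Set.range ⇑P = (V : Set X) ∧
        LinearMap.ker (P : X →ₗ[ℝ] X) = preAnn D) := by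
    constructor
    · intro htop
      have hcompl : IsCompl V (preAnn D) := ⟨disjoint_iff.2 hdisj, codisjoint_iff.2 htop⟩
      set P : X →L[ℝ] X :=
        V.subtypeL.comp (V.linearProjOfClosedCompl (preAnn D) hcompl hV hpacl) with hPdef
      have hdecomp : ∀ x : X, ∃ v ∈ V, ∃ w ∈ preAnn D, v + w = x := fun x =>
        Submodule.mem_sup.1 (htop ▸ Submodule.mem_top)
      have hPcoe : ∀ x : X, P x = ↑(V.linearProjOfIsCompl (preAnn D) hcompl x) := by
        intro x
        simp [hPdef, ContinuousLinearMap.comp_apply,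
          Submodule.coe_continuous_linearProjOfClosedCompl']
        rfl
      have hPleft : ∀ v : X, v ∈ V → P v = v := by
        intro v hv
        rw [hPcoe]
        have : V.linearProjOfIsCompl (preAnn D) hcompl v = ⟨v, hv⟩ :=
          Submodule.linearProjOfIsCompl_apply_left hcompl ⟨v, hv⟩
        rw [this]
      have hPright : ∀ w : X, w ∈ preAnn D → P w = 0 := by
        intro w hw
        rw [hPcoe]
        have := Submodule.linearProjOfIsCompl_apply_right' hcompl hw
        exact congrArg Subtype.val this
      have hPmem : ∀ x : X, P x ∈ V := by
        intro x; rw [hPcoe]; exact Submodule.coe_mem _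
      have hPP : P.comp P = P := by
        ext x
        simp only [ContinuousLinearMap.comp_apply]
        exact hPleft _ (hPmem x)
      have hPr : Set.range ⇑P = (V : Set X) := by
        apply Set.Subset.antisymm
        · rintro _ ⟨x, rfl⟩; exact hPmem x
        · intro v hv; exact ⟨v, hPleft v hv⟩
      have hPk : LinearMap.ker (P : X →ₗ[ℝ] X) = preAnn D := by
        apply le_antisymm
        · intro x hx
          rw [LinearMap.mem_ker, ContinuousLinearMap.coe_coe] at hx
          obtain ⟨v, hv, w, hw, hvw⟩ := hdecomp x
          have : P x = v := by rw [← hvw, map_add, hPleft v hv, hPright w hw, add_zero]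
          rw [hx] at this
          have : x = w := by rw [← hvw, ← this, zero_add]
          rw [this]; exact hw
        · intro w hw
          rw [LinearMap.mem_ker]
          exact hPright w hw
      refine ⟨P, ⟨hPP, hPr, hPk⟩, ?_⟩
      intro Q ⟨hQQ, hQr, hQk⟩
      ext x
      obtain ⟨v, hv, w, hw, hvw⟩ := hdecomp x
      have hQleft : ∀ u : X, u ∈ V → Q u = u := by
        intro u hu
        rw [← SetLike.mem_coe, ← hQr] at hu
        obtain ⟨y, hy⟩ := hu
        have := ContinuousLinearMap.ext_iff.1 hQQ y
        simp only [ContinuousLinearMap.comp_apply] at this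
        rw [← hy, this]
      have hQw : Q w = 0 := by
        have hm : w ∈ LinearMap.ker (Q : X →ₗ[ℝ] X) := by rw [hQk]; exact hw
        exact hm
      have hQx : Q x = v := by rw [← hvw, map_add, hQleft v hv, hQw, add_zero]
      have hPx : P x = v := by rw [← hvw, map_add, hPleft v hv, hPright w hw, add_zero]
      rw [hQx, hPx]
    · rintro ⟨P, ⟨hPP, hPr, hPk⟩, -⟩
      rw [Submodule.eq_top_iff']
      intro x
      refine Submodule.mem_sup.2 ⟨P x, ?_, x - P x, ?_, by abel⟩
      · rw [← SetLike.mem_coe, ← hPr]; exact Set.mem_range_self x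
      · rw [← hPk, LinearMap.mem_ker]
        have := ContinuousLinearMap.ext_iff.1 hPP x
        simp only [ContinuousLinearMap.comp_apply] at this
        simp [map_sub, this]
  -- (1) ↔ (2)
  have h12 : (V ⊔ preAnn D = (⊤ : Submodule ℝ X)) ↔
      (∀ f ∈ dualAnn ((preAnn D : Submodule ℝ X) : Set X), f ≠ 0 → ∃ v ∈ V, f v ≠ 0) := by
    constructor
    · intro htop f hf hfne
      by_contra hcon
      push_neg at hcon
      apply hfne
      ext x
      obtain ⟨v, hv, w, hw, hvw⟩ := Submodule.mem_sup.1 (htop ▸ Submodule.mem_top (x := x))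
      have : f x = f v + f w := by rw [← hvw, map_add]
      rw [this, hcon v hv, hf w hw, add_zero]
      rfl
    · intro h2
      by_contra hne
      rw [Submodule.eq_top_iff'] at hne
      push_neg at hne
      obtain ⟨x, hx⟩ := hne
      obtain ⟨f, hf0, hfx⟩ := sep_closed_submodule hsupcl hx
      have hfd : f ∈ dualAnn ((preAnn D : Submodule ℝ X) : Set X) := by
        intro y hy
        exact hf0 y (Submodule.mem_sup_right hy)
      have hfne : f ≠ (0 : StrongDual ℝ X) := by
        intro h
        rw [h] at hfx
        simp at hfx
      obtain ⟨v, hvV, hfv⟩ := h2 f hfd hfne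
      exact hfv (hf0 v (Submodule.mem_sup_left hvV))
  -- (3) ↔ (4)
  have h34 : (∃! P : X →L[ℝ] X, P.comp P = P ∧ Set.range ⇑P = (V : Set X) ∧
        LinearMap.ker (P : X →ₗ[ℝ] X) = preAnn D) ↔
      (∃! P : X →L[ℝ] X, P.comp P = P ∧ Set.range ⇑P = (V : Set X) ∧
        ∀ d ∈ D, d.comp P = d) := by
    constructor
    · rintro ⟨P, ⟨h1, h2, h3⟩, hu⟩
      refine ⟨P, ⟨h1, h2, (hMo P h1 h2).1 h3⟩, ?_⟩
      rintro Q ⟨q1, q2, q3⟩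
      exact hu Q ⟨q1, q2, (hMo Q q1 q2).2 q3⟩
    · rintro ⟨P, ⟨h1, h2, h3⟩, hu⟩
      refine ⟨P, ⟨h1, h2, (hMo P h1 h2).2 h3⟩, ?_⟩
      rintro Q ⟨q1, q2, q3⟩
      exact hu Q ⟨q1, q2, (hMo Q q1 q2).1 q3⟩
  exact ⟨h12, h12.symm.trans h13, h34, hMo⟩
end
end
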